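/- arXiv:2308.16809 — 11 statements merged into one kernel-verified Lean document; each statement's English description precedes it below -/
import Mathlib

section
/- Let (V,E) be a finite graph, let X, Y ⊆ V be nonempty, and let α, β, δ, ε > 0 be reals. Define X₀ = {a ∈ X : |E(a,Y)| < δ|Y|} and Y₁ = {b ∈ Y : |E(X,b)| > (1−ε)|X|}. If |Y₁| ≥ α|Y| and δ(1−β) ≤ α(β−ε), then either |X₀| < β|X| or |X₀| > (1−β)|X|. -/
open Finset

/-- Proposition 2.7 (key counting lemma behind the Symmetry Lemma): if `X₀` is the set of
vertices of `X` with few edges to `Y`, and at least an `α`-fraction of `Y` has almost all of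
`X` as neighbors, then under the arithmetic condition `δ(1-β) ≤ α(β-ε)`, the set `X₀` is
either a small or a large fraction of `X`. -/
theorem good_sets_dichotomy {V : Type} [Fintype V] (E : V → V → Prop) [DecidableRel E]
    (hsymm : ∀ a b : V, E a b → E b a)
    (X Y : Finset V) (hX : X.Nonempty) (hY : Y.Nonempty)
    (α β δ ε : ℝ) (hα : 0 < α) (hβ : 0 < β) (hδ : 0 < δ) (hε : 0 < ε)
    (X₀ : Finset V)
    (hX₀ : X₀ = X.filter fun a => ((Y.filter fun b => E a b).card : ℝ) < δ * (Y.card : ℝ))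
    (Y₁ : Finset V)
    (hY₁ : Y₁ = Y.filter fun b => ((X.filter fun a => E a b).card : ℝ) > (1 - ε) * (X.card : ℝ))
    (h1 : (Y₁.card : ℝ) ≥ α * (Y.card : ℝ))
    (h2 : δ * (1 - β) ≤ α * (β - ε)) :
    (X₀.card : ℝ) < β * (X.card : ℝ) ∨ (X₀.card : ℝ) > (1 - β) * (X.card : ℝ) := by
  classical
  by_contra hcon
  push_neg at hcon
  obtain ⟨hA, hB⟩ := hcon
  have hXsub : X₀ ⊆ X := by rw [hX₀]; exact filter_subset _ _
  have hY₁sub : Y₁ ⊆ Y := by rw [hY₁]; exact filter_subset _ _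
  have hXpos : (0:ℝ) < X.card := by exact_mod_cast card_pos.2 hX
  have hYpos : (0:ℝ) < Y.card := by exact_mod_cast card_pos.2 hY
  have hY₁pos : (0:ℝ) < Y₁.card := lt_of_lt_of_le (by positivity) h1
  have hX₀pos : (0:ℝ) < X₀.card := lt_of_lt_of_le (by positivity) hA
  have hX₀ne : X₀.Nonempty := card_pos.mp (by exact_mod_cast hX₀pos)
  -- double counting
  have hdc : ∑ b ∈ Y₁, ((X₀.filter fun a => E a b).card : ℝ)
      = ∑ a ∈ X₀, ((Y₁.filter fun b => E a b).card : ℝ) := by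
    simp_rw [Finset.card_filter]
    push_cast
    rw [Finset.sum_comm]
  -- lower bound
  have hlow : (Y₁.card : ℝ) * ((X₀.card : ℝ) - ε * X.card)
      ≤ ∑ b ∈ Y₁, ((X₀.filter fun a => E a b).card : ℝ) := by
    have key : ∀ b ∈ Y₁, (X₀.card : ℝ) - ε * X.card ≤ ((X₀.filter fun a => E a b).card : ℝ) := by
      intro b hb
      rw [hY₁, mem_filter] at hb
      have hbig : (1 - ε) * (X.card : ℝ) < ((X.filter fun a => E a b).card : ℝ) := hb.2
      have hsub2 : X.filter (fun a => E a b) ⊆ (X₀.filter fun a => E a b) ∪ (X \ X₀) := by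
        intro a ha
        rw [mem_filter] at ha
        by_cases h : a ∈ X₀
        · exact mem_union_left _ (mem_filter.mpr ⟨h, ha.2⟩)
        · exact mem_union_right _ (mem_sdiff.mpr ⟨ha.1, h⟩)
      have hcard : (X.filter fun a => E a b).card
          ≤ (X₀.filter fun a => E a b).card + ((X \ X₀)).card :=
        le_trans (card_le_card hsub2) (card_union_le _ _)
      rw [card_sdiff_of_subset hXsub] at hcard
      have hle : X₀.card ≤ X.card := card_le_card hXsub
      have hcardR : ((X.filter fun a => E a b).card : ℝ)
          ≤ ((X₀.filter fun a => E a b).card : ℝ) + ((X.card : ℝ) - X₀.card) := by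
        have h' := (Nat.cast_le (α := ℝ)).mpr hcard
        push_cast [Nat.cast_sub hle] at h'
        linarith
      linarith
    calc (Y₁.card : ℝ) * ((X₀.card : ℝ) - ε * X.card)
        = ∑ _b ∈ Y₁, ((X₀.card : ℝ) - ε * X.card) := by
          rw [Finset.sum_const, nsmul_eq_mul]
      _ ≤ _ := Finset.sum_le_sum key
  -- upper bound
  have hup : ∑ a ∈ X₀, ((Y₁.filter fun b => E a b).card : ℝ)
      < (X₀.card : ℝ) * (δ * Y.card) := by
    have hstep : ∑ a ∈ X₀, ((Y₁.filter fun b => E a b).card : ℝ)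
        ≤ ∑ a ∈ X₀, ((Y.filter fun b => E a b).card : ℝ) := by
      apply Finset.sum_le_sum
      intro a _
      exact_mod_cast card_le_card (filter_subset_filter _ hY₁sub)
    have hstrict : ∑ a ∈ X₀, ((Y.filter fun b => E a b).card : ℝ)
        < ∑ _a ∈ X₀, δ * (Y.card : ℝ) := by
      apply Finset.sum_lt_sum_of_nonempty hX₀ne
      intro a ha
      rw [hX₀, mem_filter] at ha
      exact ha.2
    rw [Finset.sum_const, nsmul_eq_mul] at hstrict
    linarith
  rw [← hdc] at hup
  have hSnn : (0:ℝ) ≤ ∑ b ∈ Y₁, ((X₀.filter fun a => E a b).card : ℝ) :=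
    Finset.sum_nonneg fun b _ => by positivity
  have hXY : (0:ℝ) ≤ (X.card : ℝ) * Y.card := by positivity
  have t4 : δ * (1 - β) * ((X.card : ℝ) * Y.card) ≤ α * (β - ε) * ((X.card : ℝ) * Y.card) :=
    mul_le_mul_of_nonneg_right h2 hXY
  have t3 : (X₀.card : ℝ) * (δ * Y.card) ≤ (1 - β) * (X.card : ℝ) * (δ * Y.card) :=
    mul_le_mul_of_nonneg_right hB (by positivity)
  rcases le_or_gt 0 (β - ε) with hbe | hbe
  · have t1 : (Y₁.card : ℝ) * ((β - ε) * X.card) ≤ (Y₁.card : ℝ) * ((X₀.card : ℝ) - ε * X.card) :=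
      mul_le_mul_of_nonneg_left (by linarith) hY₁pos.le
    have t2 : α * (Y.card : ℝ) * ((β - ε) * X.card) ≤ (Y₁.card : ℝ) * ((β - ε) * X.card) :=
      mul_le_mul_of_nonneg_right h1 (mul_nonneg hbe hXpos.le)
    nlinarith [t1, t2, t3, t4, hlow, hup]
  · have tneg : α * (β - ε) * ((X.card : ℝ) * Y.card) < 0 :=
      mul_neg_of_neg_of_pos (mul_neg_of_pos_of_neg hα hbe) (mul_pos hXpos hYpos)
    nlinarith [t3, t4, tneg, hup, hSnn]
end

section
/- (Symmetry Lemma) Let (V,E) be a finite graph, let ε > 0, and suppose X, Y ⊆ V are nonempty sets that are each (ε²/4)-good in (V,E). Then either d(X,Y) < ε or d(X,Y) > 1 − ε. -/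
open Finset

/-- Edge density between two finite vertex sets with respect to an edge relation. -/
noncomputable def edgeDensity {V : Type} (E : V → V → Prop) [DecidableRel E]
    (X Y : Finset V) : ℝ :=
  (((X ×ˢ Y).filter fun p => E p.1 p.2).card : ℝ) / ((X.card : ℝ) * (Y.card : ℝ))

/-- `X` is `ε`-good in `(V,E)`: every vertex has either few or almost all of `X` as
neighbors. -/
def IsGood {V : Type} [Fintype V] (E : V → V → Prop) [DecidableRel E]
    (ε : ℝ) (X : Finset V) : Prop :=
  ∀ b : V, ((X.filter fun a => E a b).card : ℝ) < ε * (X.card : ℝ) ∨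
           ((X.filter fun a => E a b).card : ℝ) > (1 - ε) * (X.card : ℝ)

lemma double_count {V : Type} (E : V → V → Prop) [DecidableRel E] (A B : Finset V) :
    ∑ b ∈ B, (A.filter fun a => E a b).card = ∑ a ∈ A, (B.filter fun b => E a b).card := by
  simp only [Finset.card_filter]
  rw [Finset.sum_comm]

lemma prod_count {V : Type} (E : V → V → Prop) [DecidableRel E] (A B : Finset V) :
    ((A ×ˢ B).filter fun p => E p.1 p.2).card = ∑ b ∈ B, (A.filter fun a => E a b).card := by
  simp only [Finset.card_filter]
  rw [Finset.sum_product, Finset.sum_comm]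

lemma sum_le_card_mul {V : Type} (s : Finset V) (f : V → ℝ) (c : ℝ)
    (h : ∀ b ∈ s, f b ≤ c) : ∑ b ∈ s, f b ≤ (s.card : ℝ) * c := by
  calc ∑ b ∈ s, f b ≤ ∑ _b ∈ s, c := Finset.sum_le_sum h
    _ = (s.card : ℝ) * c := by rw [Finset.sum_const, nsmul_eq_mul]

lemma card_mul_le_sum {V : Type} (s : Finset V) (f : V → ℝ) (c : ℝ)
    (h : ∀ b ∈ s, c ≤ f b) : (s.card : ℝ) * c ≤ ∑ b ∈ s, f b := by
  calc (s.card : ℝ) * c = ∑ _b ∈ s, c := by rw [Finset.sum_const, nsmul_eq_mul]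
    _ ≤ ∑ b ∈ s, f b := Finset.sum_le_sum h

set_option maxHeartbeats 1000000 in
/-- Symmetry Lemma: a pair of `(ε²/4)`-good sets is `ε`-homogeneous. -/
theorem symmetry_lemma {V : Type} [Fintype V] (E : V → V → Prop) [DecidableRel E]
    (hsymm : ∀ a b : V, E a b → E b a)
    (ε : ℝ) (hε : 0 < ε)
    (X Y : Finset V) (hX : X.Nonempty) (hY : Y.Nonempty)
    (hXgood : IsGood E (ε ^ 2 / 4) X) (hYgood : IsGood E (ε ^ 2 / 4) Y) :
    edgeDensity E X Y < ε ∨ edgeDensity E X Y > 1 - ε := by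
  classical
  by_contra hcon
  push_neg at hcon
  obtain ⟨h1, h2⟩ := hcon
  simp only [edgeDensity] at h1 h2
  have hδdef : (0:ℝ) < ε ^ 2 / 4 := by positivity
  generalize hδ : ε ^ 2 / 4 = δ at *
  have hδpos : 0 < δ := hδdef
  have hx : (0:ℝ) < (X.card : ℝ) := by exact_mod_cast Finset.card_pos.2 hX
  have hy : (0:ℝ) < (Y.card : ℝ) := by exact_mod_cast Finset.card_pos.2 hY
  have hxy : (0:ℝ) < (X.card : ℝ) * (Y.card : ℝ) := mul_pos hx hy
  have hD1 : ε * ((X.card : ℝ) * (Y.card : ℝ))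
      ≤ ((((X ×ˢ Y).filter fun p => E p.1 p.2).card : ℕ) : ℝ) := (le_div_iff₀ hxy).mp h1
  have hD2 : ((((X ×ˢ Y).filter fun p => E p.1 p.2).card : ℕ) : ℝ)
      ≤ (1 - ε) * ((X.card : ℝ) * (Y.card : ℝ)) := (div_le_iff₀ hxy).mp h2
  have hεle : ε ≤ 1 - ε := le_of_mul_le_mul_right (hD1.trans hD2) hxy
  have hδ1 : δ < 1 := by nlinarith
  set Yhi : Finset V :=
    Y.filter (fun b => (1 - δ) * (X.card : ℝ) < ((X.filter fun a => E a b).card : ℝ))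
    with hYhidef
  set Xhi : Finset V :=
    X.filter (fun a => (1 - δ) * (Y.card : ℝ) < ((Y.filter fun b => E b a).card : ℝ))
    with hXhidef
  -- edge count as sums
  have heY : ((((X ×ˢ Y).filter fun p => E p.1 p.2).card : ℕ) : ℝ)
      = ∑ b ∈ Y, ((X.filter fun a => E a b).card : ℝ) := by
    rw [prod_count]; push_cast; rfl
  have heX : ((((X ×ˢ Y).filter fun p => E p.1 p.2).card : ℕ) : ℝ)
      = ∑ a ∈ X, ((Y.filter fun b => E b a).card : ℝ) := by
    rw [prod_count, double_count]
    push_cast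
    apply Finset.sum_congr rfl
    intro a _
    have : (Y.filter fun b => E a b) = (Y.filter fun b => E b a) :=
      Finset.filter_congr (fun b _ => ⟨hsymm a b, hsymm b a⟩)
    rw [this]
  -- Fact A
  have hA : ((((X ×ˢ Y).filter fun p => E p.1 p.2).card : ℕ) : ℝ)
      ≤ (Yhi.card : ℝ) * (X.card : ℝ) + (Y.card : ℝ) * (δ * (X.card : ℝ)) := by
    rw [heY, ← Finset.sum_filter_add_sum_filter_not Y
      (fun b => (1 - δ) * (X.card : ℝ) < ((X.filter fun a => E a b).card : ℝ))]
    have hhi : ∑ b ∈ Yhi, ((X.filter fun a => E a b).card : ℝ)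
        ≤ (Yhi.card : ℝ) * (X.card : ℝ) := by
      apply sum_le_card_mul
      intro b _
      exact_mod_cast Finset.card_filter_le X (fun a => E a b)
    have hlo : ∑ b ∈ Y.filter
          (fun b => ¬ ((1 - δ) * (X.card : ℝ) < ((X.filter fun a => E a b).card : ℝ))),
        ((X.filter fun a => E a b).card : ℝ) ≤ (Y.card : ℝ) * (δ * (X.card : ℝ)) := by
      have step : ∀ b ∈ Y.filter
          (fun b => ¬ ((1 - δ) * (X.card : ℝ) < ((X.filter fun a => E a b).card : ℝ))),
          ((X.filter fun a => E a b).card : ℝ) ≤ δ * (X.card : ℝ) := by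
        intro b hb
        rw [Finset.mem_filter] at hb
        rcases hXgood b with h | h
        · exact le_of_lt h
        · exact absurd h hb.2
      refine (sum_le_card_mul _ _ _ step).trans ?_
      apply mul_le_mul_of_nonneg_right
      · exact_mod_cast Finset.card_filter_le Y _
      · positivity
    exact add_le_add hhi hlo
  -- Fact B
  have hB : (Xhi.card : ℝ) * ((1 - δ) * (Y.card : ℝ))
      ≤ ((((X ×ˢ Y).filter fun p => E p.1 p.2).card : ℕ) : ℝ) := by
    rw [heX]
    refine (card_mul_le_sum Xhi (fun a => ((Y.filter fun b => E b a).card : ℝ)) _ ?_).trans ?_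
    · intro a ha
      rw [hXhidef, Finset.mem_filter] at ha
      exact le_of_lt ha.2
    · apply Finset.sum_le_sum_of_subset_of_nonneg (Finset.filter_subset _ _)
      intro a _ _; positivity
  -- Fact C : cross counting between X \ Xhi and Yhi
  have hC : (Yhi.card : ℝ) * ((1 - δ) * (X.card : ℝ) - (Xhi.card : ℝ))
      ≤ (X.card : ℝ) * (δ * (Y.card : ℝ)) := by
    have hlower : (Yhi.card : ℝ) * ((1 - δ) * (X.card : ℝ) - (Xhi.card : ℝ))
        ≤ ∑ b ∈ Yhi, (((X \ Xhi).filter fun a => E a b).card : ℝ) := by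
      apply card_mul_le_sum
      intro b hb
      rw [hYhidef, Finset.mem_filter] at hb
      have hsub : X.filter (fun a => E a b) ⊆ ((X \ Xhi).filter fun a => E a b) ∪ Xhi := by
        intro a ha
        rw [Finset.mem_filter] at ha
        rw [Finset.mem_union, Finset.mem_filter, Finset.mem_sdiff]
        by_cases hmem : a ∈ Xhi
        · exact Or.inr hmem
        · exact Or.inl ⟨⟨ha.1, hmem⟩, ha.2⟩
      have hcard : ((X.filter fun a => E a b).card : ℝ)
          ≤ (((X \ Xhi).filter fun a => E a b).card : ℝ) + (Xhi.card : ℝ) := by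
        have := (Finset.card_le_card hsub).trans (Finset.card_union_le _ _)
        exact_mod_cast this
      linarith [hb.2]
    have hupper : ∑ b ∈ Yhi, (((X \ Xhi).filter fun a => E a b).card : ℝ)
        ≤ (X.card : ℝ) * (δ * (Y.card : ℝ)) := by
      have hcr : ∑ b ∈ Yhi, (((X \ Xhi).filter fun a => E a b).card : ℝ)
          = ∑ a ∈ X \ Xhi, ((Yhi.filter fun b => E a b).card : ℝ) := by
        have := double_count E (X \ Xhi) Yhi
        exact_mod_cast congrArg (Nat.cast : ℕ → ℝ) this
      rw [hcr]
      have step : ∀ a ∈ X \ Xhi,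
          ((Yhi.filter fun b => E a b).card : ℝ) ≤ δ * (Y.card : ℝ) := by
        intro a ha
        rw [Finset.mem_sdiff, hXhidef, Finset.mem_filter] at ha
        have hnot : ¬ ((1 - δ) * (Y.card : ℝ) < ((Y.filter fun b => E b a).card : ℝ)) := by
          intro hlt
          exact ha.2 ⟨ha.1, hlt⟩
        have hgood : ((Y.filter fun b => E b a).card : ℝ) < δ * (Y.card : ℝ) := by
          rcases hYgood a with h | h
          · exact h
          · exact absurd h hnot
        have hsub2 : Yhi.filter (fun b => E a b) ⊆ Y.filter (fun b => E b a) := by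
          intro b hb
          rw [Finset.mem_filter] at hb ⊢
          rw [hYhidef, Finset.mem_filter] at hb
          exact ⟨hb.1.1, hsymm a b hb.2⟩
        have hc : ((Yhi.filter fun b => E a b).card : ℝ)
            ≤ ((Y.filter fun b => E b a).card : ℝ) := by
          exact_mod_cast Finset.card_le_card hsub2
        linarith
      refine (sum_le_card_mul _ (fun a => ((Yhi.filter fun b => E a b).card : ℝ)) _ step).trans ?_
      apply mul_le_mul_of_nonneg_right
      · exact_mod_cast Finset.card_le_card (Finset.sdiff_subset)
      · positivity
    exact hlower.trans hupper
  -- scalar consequences: pure real arithmetic from here on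
  generalize heR : ((((X ×ˢ Y).filter fun p => E p.1 p.2).card : ℕ) : ℝ) = eR at hD1 hD2 hA hB
  generalize hpg : ((Yhi.card : ℕ) : ℝ) = pR at hA hC
  generalize hqg : ((Xhi.card : ℕ) : ℝ) = qR at hB hC
  generalize hxg : ((X.card : ℕ) : ℝ) = xR at hx hxy hD1 hD2 hA hB hC
  generalize hyg : ((Y.card : ℕ) : ℝ) = yR at hy hxy hD1 hD2 hA hB hC
  clear h1 h2 heY heX hXgood hYgood hsymm hX hY hYhidef hXhidef heR hpg hqg hxg hyg
  have hp : (ε - δ) * yR ≤ pR := by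
    apply le_of_mul_le_mul_left _ hx
    nlinarith [hA, hD1]
  have hq1 : (1 - δ) * qR ≤ (1 - ε) * xR := by
    apply le_of_mul_le_mul_left _ hy
    nlinarith [hB, hD2]
  have hεδ : 0 ≤ ε - δ := by nlinarith [hε, hεle]
  have hc0 : 0 ≤ ε - 2*δ + δ^2 := by rw [← hδ]; nlinarith [hε, hεle]
  have hK2 : (ε - 2*δ + δ^2) * xR ≤ (1 - δ) * ((1 - δ) * xR - qR) := by nlinarith [hq1]
  have hK0 : 0 ≤ (1 - δ) * xR - qR := by
    nlinarith [hK2, mul_nonneg hc0 hx.le, hδ1]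
  have h2' : (ε - δ) * yR * ((1 - δ) * xR - qR) ≤ xR * (δ * yR) :=
    (mul_le_mul_of_nonneg_right hp hK0).trans hC
  have h3 : (1 - δ) * ((ε - δ) * yR * ((1 - δ) * xR - qR)) ≤ (1 - δ) * (xR * (δ * yR)) :=
    mul_le_mul_of_nonneg_left h2' (by linarith)
  have h4 : ((ε - δ) * yR) * ((ε - 2*δ + δ^2) * xR)
      ≤ ((ε - δ) * yR) * ((1 - δ) * ((1 - δ) * xR - qR)) :=
    mul_le_mul_of_nonneg_left hK2 (mul_nonneg hεδ hy.le)
  have hscal : ((ε - δ) * (ε - 2*δ + δ^2)) * (xR * yR) ≤ (δ * (1 - δ)) * (xR * yR) := by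
    nlinarith [h3, h4]
  have hfin : (ε - δ) * (ε - 2*δ + δ^2) ≤ δ * (1 - δ) :=
    le_of_mul_le_mul_right hscal hxy
  rw [← hδ] at hfin
  nlinarith [hfin, hε, hεle, sq_nonneg ε, mul_pos hε hε]
end

section
/- Let (V,E) be a finite graph and let 0 < ε < 1/2 and 0 < δ < 1/2. If X ⊆ V is nonempty and ε-good in (V,E), then X is ((ε+2δ)/(1+2δ), δ)-excellent in (V,E). -/
open Finset

/-- `X` is `(ε,δ)`-excellent in `(V,E)`: `X` is `ε`-good and, for every nonempty `δ`-good
set `Y`, the set of vertices of `X` with few edges to `Y` is either a small or large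
fraction of `X`. -/
def IsExcellent {V : Type} [Fintype V] (E : V → V → Prop) [DecidableRel E]
    (ε δ : ℝ) (X : Finset V) : Prop :=
  IsGood E ε X ∧
    ∀ Y : Finset V, Y.Nonempty → IsGood E δ Y →
      (((X.filter fun a => ((Y.filter fun b => E a b).card : ℝ) < δ * (Y.card : ℝ)).card : ℝ)
          < ε * (X.card : ℝ)) ∨
      (((X.filter fun a => ((Y.filter fun b => E a b).card : ℝ) < δ * (Y.card : ℝ)).card : ℝ)
          > (1 - ε) * (X.card : ℝ))

lemma sum_card_filter_comm {V : Type} (A B : Finset V) (r : V → V → Prop) [DecidableRel r] :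
    ∑ a ∈ A, (B.filter fun b => r a b).card = ∑ b ∈ B, (A.filter fun a => r a b).card := by
  simp_rw [Finset.card_filter]
  exact Finset.sum_comm


set_option maxHeartbeats 1000000 in
/-- An `ε`-good set is `((ε+2δ)/(1+2δ), δ)`-excellent, for any `0 < ε, δ < 1/2`. -/
theorem good_implies_excellent {V : Type} [Fintype V] (E : V → V → Prop) [DecidableRel E]
    (hsymm : ∀ a b : V, E a b → E b a)
    (ε δ : ℝ) (hε0 : 0 < ε) (hε : ε < 1 / 2) (hδ0 : 0 < δ) (hδ : δ < 1 / 2)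
    (X : Finset V) (hX : X.Nonempty) (hXgood : IsGood E ε X) :
    IsExcellent E ((ε + 2 * δ) / (1 + 2 * δ)) δ X := by
  classical
  have h2δ : (0:ℝ) < 1 + 2 * δ := by linarith
  set ε' : ℝ := (ε + 2 * δ) / (1 + 2 * δ) with hε'def
  have hεε' : ε < ε' := by
    rw [hε'def, lt_div_iff₀ h2δ]; nlinarith
  have hε'pos : 0 < ε' := lt_trans hε0 hεε'
  constructor
  · -- goodness
    intro b
    rcases hXgood b with h | h
    · left
      calc ((X.filter fun a => E a b).card : ℝ) < ε * X.card := h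
        _ ≤ ε' * X.card := by
            apply mul_le_mul_of_nonneg_right hεε'.le (by positivity)
    · right
      have : (1 - ε') * (X.card : ℝ) ≤ (1 - ε) * X.card := by
        apply mul_le_mul_of_nonneg_right (by linarith) (by positivity)
      exact lt_of_le_of_lt this h
  · intro Y hYne hYgood
    by_contra hcon
    push_neg at hcon
    obtain ⟨h1, h2⟩ := hcon
    -- notation
    set m : ℝ := (X.card : ℝ) with hmdef
    set n : ℝ := (Y.card : ℝ) with hndef
    have hm : 0 < m := by
      rw [hmdef]; exact_mod_cast Finset.card_pos.mpr hX
    have hn : 0 < n := by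
      rw [hndef]; exact_mod_cast Finset.card_pos.mpr hYne
    set X0 : Finset V :=
      X.filter fun a => ((Y.filter fun b => E a b).card : ℝ) < δ * n with hX0def
    set k : ℝ := (X0.card : ℝ) with hkdef
    have hX0X : X0 ⊆ X := Finset.filter_subset _ _
    -- h1 : ε' * m ≤ k, h2 : k ≤ (1 - ε') * m
    have hk1 : (ε + 2 * δ) * m ≤ (1 + 2 * δ) * k := by
      rw [hε'def, div_mul_eq_mul_div, div_le_iff₀ h2δ] at h1
      linarith
    have hk2 : (1 + 2 * δ) * k ≤ (1 - ε) * m := by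
      have h3 : (1 + 2 * δ) * k ≤ (1 + 2 * δ) * ((1 - ε') * m) :=
        mul_le_mul_of_nonneg_left h2 h2δ.le
      have h4 : (1 + 2 * δ) * ((1 - ε') * m) = (1 - ε) * m := by
        rw [hε'def]; field_simp; ring
      linarith
    have hkε : ε * m < k := by nlinarith
    have hkε2 : ε * m < m - k := by nlinarith
    have hkpos : 0 < k := by nlinarith
    have hX0ne : X0.Nonempty := by
      rw [← Finset.card_pos]
      have h5 : (0:ℝ) < ((X0.card : ℕ) : ℝ) := hkpos
      exact_mod_cast h5
    set X1 : Finset V := X \ X0 with hX1def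
    have hX1card : (X1.card : ℝ) = m - k := by
      rw [hX1def, Finset.card_sdiff_of_subset hX0X]
      rw [hmdef, hkdef]
      push_cast [Finset.card_le_card hX0X]
      ring
    have hX1ne : X1.Nonempty := by
      rw [← Finset.card_pos]
      have h5 : (0:ℝ) < (X1.card : ℝ) := by rw [hX1card]; nlinarith
      exact_mod_cast h5
    set Y1 : Finset V :=
      Y.filter fun b => (1 - ε) * m < ((X.filter fun a => E a b).card : ℝ) with hY1def
    set c : ℝ := (Y1.card : ℝ) with hcdef
    have hY0card : ((Y.filter fun b =>
        ¬ ((1 - ε) * m < ((X.filter fun a => E a b).card : ℝ))).card : ℝ) = n - c := by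
      have h5 := Finset.card_filter_add_card_filter_not
        (s := Y) (p := fun b => (1 - ε) * m < ((X.filter fun a => E a b).card : ℝ))
      rw [hcdef, hndef, hY1def]
      push_cast [← h5]
      ring
    -- edge count from X0
    have e0_upper : (∑ a ∈ X0, ((Y.filter fun b => E a b).card : ℝ)) < δ * n * k := by
      have h3 : (∑ a ∈ X0, ((Y.filter fun b => E a b).card : ℝ)) <
          ∑ _a ∈ X0, δ * n := by
        apply Finset.sum_lt_sum_of_nonempty hX0ne
        intro a ha
        exact (Finset.mem_filter.mp ha).2
      rw [Finset.sum_const, nsmul_eq_mul] at h3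
      rw [← hkdef] at h3
      linarith
    have e0_lower : c * (k - ε * m) ≤ ∑ a ∈ X0, ((Y.filter fun b => E a b).card : ℝ) := by
      have hswap : (∑ a ∈ X0, ((Y.filter fun b => E a b).card : ℝ)) =
          ∑ b ∈ Y, ((X0.filter fun a => E a b).card : ℝ) := by
        exact_mod_cast congrArg (Nat.cast : ℕ → ℝ) (sum_card_filter_comm X0 Y E)
      rw [hswap]
      have hsub : (∑ b ∈ Y1, ((X0.filter fun a => E a b).card : ℝ)) ≤
          ∑ b ∈ Y, ((X0.filter fun a => E a b).card : ℝ) := by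
        apply Finset.sum_le_sum_of_subset_of_nonneg (Finset.filter_subset _ _)
        intro b _ _; positivity
      have hterm : ∀ b ∈ Y1, k - ε * m ≤ ((X0.filter fun a => E a b).card : ℝ) := by
        intro b hb
        have hbig : (1 - ε) * m < ((X.filter fun a => E a b).card : ℝ) :=
          (Finset.mem_filter.mp hb).2
        have s0 : ((X0.filter fun a => E a b).card : ℝ) +
            ((X0.filter fun a => ¬ E a b).card : ℝ) = k := by
          rw [hkdef]
          exact_mod_cast Finset.card_filter_add_card_filter_not
            (s := X0) (p := fun a => E a b)
        have sX : ((X.filter fun a => E a b).card : ℝ) +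
            ((X.filter fun a => ¬ E a b).card : ℝ) = m := by
          rw [hmdef]
          exact_mod_cast Finset.card_filter_add_card_filter_not
            (s := X) (p := fun a => E a b)
        have hmono : ((X0.filter fun a => ¬ E a b).card : ℝ) ≤
            ((X.filter fun a => ¬ E a b).card : ℝ) := by
          exact_mod_cast Finset.card_le_card (Finset.filter_subset_filter _ hX0X)
        linarith
      have hlow : c * (k - ε * m) ≤ ∑ b ∈ Y1, ((X0.filter fun a => E a b).card : ℝ) := by
        have h5 := Finset.sum_le_sum hterm
        rw [Finset.sum_const, nsmul_eq_mul, ← hcdef] at h5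
        linarith
      linarith
    -- edge count from X1
    have e1_lower : (1 - δ) * n * (m - k) < ∑ a ∈ X1, ((Y.filter fun b => E a b).card : ℝ) := by
      have h3 : (∑ _a ∈ X1, (1 - δ) * n) <
          ∑ a ∈ X1, ((Y.filter fun b => E a b).card : ℝ) := by
        apply Finset.sum_lt_sum_of_nonempty hX1ne
        intro a ha
        have haX : a ∈ X := (Finset.mem_sdiff.mp ha).1
        have haX0 : a ∉ X0 := (Finset.mem_sdiff.mp ha).2
        have hge : δ * n ≤ ((Y.filter fun b => E a b).card : ℝ) := by
          by_contra hlt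
          push_neg at hlt
          exact haX0 (Finset.mem_filter.mpr ⟨haX, hlt⟩)
        have hfe : (Y.filter fun b => E b a) = (Y.filter fun b => E a b) := by
          apply Finset.filter_congr
          intro b _
          exact ⟨fun h => hsymm b a h, fun h => hsymm a b h⟩
        have h6 := hYgood a
        rw [hfe] at h6
        rcases h6 with h | h
        · exact absurd hge (not_le.mpr h)
        · exact lt_of_le_of_lt (by linarith) h
      rw [Finset.sum_const, nsmul_eq_mul, hX1card] at h3
      linarith
    have e1_upper : (∑ a ∈ X1, ((Y.filter fun b => E a b).card : ℝ)) ≤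
        (n - c) * (ε * m) + c * (m - k) := by
      have hswap : (∑ a ∈ X1, ((Y.filter fun b => E a b).card : ℝ)) =
          ∑ b ∈ Y, ((X1.filter fun a => E a b).card : ℝ) := by
        exact_mod_cast congrArg (Nat.cast : ℕ → ℝ) (sum_card_filter_comm X1 Y E)
      rw [hswap]
      have hsplit : (∑ b ∈ Y, ((X1.filter fun a => E a b).card : ℝ)) =
          (∑ b ∈ Y1, ((X1.filter fun a => E a b).card : ℝ)) +
          ∑ b ∈ Y.filter fun b => ¬ ((1 - ε) * m < ((X.filter fun a => E a b).card : ℝ)),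
            ((X1.filter fun a => E a b).card : ℝ) := by
        rw [hY1def]
        exact (Finset.sum_filter_add_sum_filter_not Y _ _).symm
      rw [hsplit]
      have hb1 : (∑ b ∈ Y1, ((X1.filter fun a => E a b).card : ℝ)) ≤ c * (m - k) := by
        have hterm : ∀ b ∈ Y1, ((X1.filter fun a => E a b).card : ℝ) ≤ m - k := by
          intro b _
          rw [← hX1card]
          exact_mod_cast Finset.card_le_card (Finset.filter_subset _ _)
        have h5 := Finset.sum_le_sum hterm
        rw [Finset.sum_const, nsmul_eq_mul, ← hcdef] at h5
        linarith
      have hb0 : (∑ b ∈ Y.filter fun b =>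
            ¬ ((1 - ε) * m < ((X.filter fun a => E a b).card : ℝ)),
            ((X1.filter fun a => E a b).card : ℝ)) ≤ (n - c) * (ε * m) := by
        have hterm : ∀ b ∈ Y.filter fun b =>
            ¬ ((1 - ε) * m < ((X.filter fun a => E a b).card : ℝ)),
            ((X1.filter fun a => E a b).card : ℝ) ≤ ε * m := by
          intro b hb
          have hble : ¬ ((1 - ε) * m < ((X.filter fun a => E a b).card : ℝ)) :=
            (Finset.mem_filter.mp hb).2
          have hsmall : ((X.filter fun a => E a b).card : ℝ) < ε * m := by
            rcases hXgood b with h | h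
            · exact h
            · exact absurd h hble
          have hmono : ((X1.filter fun a => E a b).card : ℝ) ≤
              ((X.filter fun a => E a b).card : ℝ) := by
            exact_mod_cast Finset.card_le_card
              (Finset.filter_subset_filter _ (Finset.sdiff_subset))
          linarith
        have h5 := Finset.sum_le_sum hterm
        rw [Finset.sum_const, nsmul_eq_mul, hY0card] at h5
        linarith
      linarith
    -- combine
    have c1 : c * (k - ε * m) < δ * n * k := lt_of_le_of_lt e0_lower e0_upper
    have c2 : (1 - δ) * n * (m - k) < (n - c) * (ε * m) + c * (m - k) :=
      lt_of_lt_of_le e1_lower e1_upper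
    have h3 : (1 - δ) * n * (m - k) - n * (ε * m) < c * ((m - k) - ε * m) := by
      linear_combination c2
    have h4 := mul_lt_mul_of_pos_right h3 (sub_pos.2 hkε)
    have h5 := mul_lt_mul_of_pos_right c1 (sub_pos.2 hkε2)
    have h6 : n * (((1 - δ) * (m - k) - ε * m) * (k - ε * m)) <
        n * (δ * k * ((m - k) - ε * m)) := by linarith [h4, h5]
    have key : ((1 - δ) * (m - k) - ε * m) * (k - ε * m) < δ * k * ((m - k) - ε * m) :=
      lt_of_mul_lt_mul_left h6 hn.le
    rcases le_or_gt (ε + δ) (1 / 2) with hcase | hcase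
    · have hA : (0:ℝ) ≤ (1 + 2 * δ) * k - (ε + 2 * δ) * m := by linarith
      have hB : (0:ℝ) ≤ (1 - ε) * m - (1 + 2 * δ) * k := by linarith
      have t1 : (0:ℝ) ≤ (1 - 2 * δ) *
          (((1 + 2 * δ) * k - (ε + 2 * δ) * m) * ((1 - ε) * m - (1 + 2 * δ) * k)) := by
        apply mul_nonneg (by linarith) (mul_nonneg hA hB)
      have t2 : (0:ℝ) ≤ (δ * (1 - 2 * ε - 2 * δ) * (2 - 3 * ε - 2 * ε * δ)) * (m * m) := by
        apply mul_nonneg _ (mul_nonneg hm.le hm.le)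
        apply mul_nonneg (mul_nonneg hδ0.le (by linarith))
        nlinarith [mul_pos hε0 hδ0]
      have key2 := mul_lt_mul_of_pos_left key (mul_pos h2δ h2δ)
      linarith [key2, t1, t2]
    · nlinarith [hk1, hk2, hm, hcase]
end

section
/- Let (V,E) be a finite graph, let ε > 0, and let X, Y ⊆ V be nonempty. If the pair (X,Y) is ε-homogeneous in (V,E), then (X,Y) is √ε-special in (V,E). -/
open Finset
open scoped Classical

/-- The pair `(X,Y)` is `ε`-homogeneous: its edge density is `< ε` or `> 1 - ε`. -/
def IsHomogeneous {V : Type} (E : V → V → Prop) [DecidableRel E]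
    (ε : ℝ) (X Y : Finset V) : Prop :=
  edgeDensity E X Y < ε ∨ edgeDensity E X Y > 1 - ε

/-- The pair `(X,Y)` is `ε`-special: there are large subsets `X' ⊆ X`, `Y' ⊆ Y` such that
either all vertices of `X'` and `Y'` have few neighbors in `Y` and `X` respectively, or
all have almost all of `Y` and `X` as neighbors. -/
def IsSpecial {V : Type} (E : V → V → Prop) [DecidableRel E]
    (ε : ℝ) (X Y : Finset V) : Prop :=
  ∃ X' ⊆ X, ∃ Y' ⊆ Y,
    ((X'.card : ℝ) > (1 - ε) * (X.card : ℝ)) ∧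
    ((Y'.card : ℝ) > (1 - ε) * (Y.card : ℝ)) ∧
    ((∀ a ∈ X', ∀ b ∈ Y',
        ((Y.filter fun y => E a y).card : ℝ) < ε * (Y.card : ℝ) ∧
        ((X.filter fun x => E x b).card : ℝ) < ε * (X.card : ℝ)) ∨
     (∀ a ∈ X', ∀ b ∈ Y',
        ((Y.filter fun y => E a y).card : ℝ) > (1 - ε) * (Y.card : ℝ) ∧
        ((X.filter fun x => E x b).card : ℝ) > (1 - ε) * (X.card : ℝ)))

lemma card_filter_prod_eq_sum {V : Type} (P : V → V → Prop) [DecidableRel P]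
    (X Y : Finset V) :
    (((X ×ˢ Y).filter fun p => P p.1 p.2).card) = ∑ a ∈ X, (Y.filter fun y => P a y).card := by
  rw [Finset.card_filter, Finset.sum_product]
  simp only [Finset.card_filter]

lemma card_filter_prod_eq_sum' {V : Type} (P : V → V → Prop) [DecidableRel P]
    (X Y : Finset V) :
    (((X ×ˢ Y).filter fun p => P p.1 p.2).card) = ∑ b ∈ Y, (X.filter fun x => P x b).card := by
  rw [Finset.card_filter, Finset.sum_product_right]
  simp only [Finset.card_filter]

lemma small_degree_many {V : Type} (P : V → V → Prop) [DecidableRel P]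
    (δ : ℝ) (hδ : 0 < δ) (X Y : Finset V) (hY : 0 < (Y.card : ℝ))
    (hcount : ((((X ×ˢ Y).filter fun p => P p.1 p.2).card : ℝ)) < δ * δ * X.card * Y.card) :
    (((X.filter fun a => ((Y.filter fun y => P a y).card : ℝ) < δ * Y.card).card : ℝ)) >
      (1 - δ) * X.card := by
  set B := X.filter fun a => ¬ (((Y.filter fun y => P a y).card : ℝ) < δ * Y.card) with hB
  have hBbound : δ * Y.card * B.card ≤ (((X ×ˢ Y).filter fun p => P p.1 p.2).card : ℝ) := by
    rw [card_filter_prod_eq_sum]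
    push_cast
    calc δ * Y.card * B.card = ∑ _a ∈ B, δ * Y.card := by rw [Finset.sum_const]; push_cast; ring
    _ ≤ ∑ a ∈ B, ((Y.filter fun y => P a y).card : ℝ) := by
        apply Finset.sum_le_sum
        intro a ha
        rw [hB, Finset.mem_filter] at ha
        linarith [ha.2]
    _ ≤ ∑ a ∈ X, ((Y.filter fun y => P a y).card : ℝ) := by
        apply Finset.sum_le_sum_of_subset_of_nonneg (Finset.filter_subset _ _)
        intros; positivity
  have hBcard : (B.card : ℝ) < δ * X.card := by
    have h1 : δ * Y.card * B.card < δ * Y.card * (δ * X.card) := by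
      calc δ * Y.card * B.card ≤ _ := hBbound
      _ < δ * δ * X.card * Y.card := hcount
      _ = δ * Y.card * (δ * X.card) := by ring
    exact lt_of_mul_lt_mul_left h1 (by positivity)
  have hsplit : ((X.filter fun a => ((Y.filter fun y => P a y).card : ℝ) < δ * Y.card).card) + B.card = X.card :=
    Finset.card_filter_add_card_filter_not _
  have hsplit' : (((X.filter fun a => ((Y.filter fun y => P a y).card : ℝ) < δ * Y.card).card : ℝ)) + B.card = X.card := by
    exact_mod_cast hsplit
  linarith

/-- An `ε`-homogeneous pair is `√ε`-special. -/
theorem homogeneous_implies_special {V : Type} [Fintype V]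
    (E : V → V → Prop) [DecidableRel E]
    (hsymm : ∀ a b : V, E a b → E b a)
    (ε : ℝ) (hε : 0 < ε)
    (X Y : Finset V) (hX : X.Nonempty) (hY : Y.Nonempty)
    (h : IsHomogeneous E ε X Y) :
    IsSpecial E (Real.sqrt ε) X Y := by
  have hX0 : 0 < (X.card : ℝ) := by exact_mod_cast Finset.card_pos.2 hX
  have hY0 : 0 < (Y.card : ℝ) := by exact_mod_cast Finset.card_pos.2 hY
  set δ := Real.sqrt ε with hδdef
  have hδ : 0 < δ := Real.sqrt_pos.2 hε
  have hδ2 : δ * δ = ε := Real.mul_self_sqrt hε.le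
  set c : ℝ := (((X ×ˢ Y).filter fun p => E p.1 p.2).card : ℝ) with hc
  have hswap : (((Y ×ˢ X).filter fun p => E p.2 p.1).card) =
      (((X ×ˢ Y).filter fun p => E p.1 p.2).card) := by
    rw [card_filter_prod_eq_sum (fun b a => E a b) Y X, card_filter_prod_eq_sum' E X Y]
  have hcompl : ((((X ×ˢ Y).filter fun p => ¬ E p.1 p.2).card : ℝ)) = X.card * Y.card - c := by
    have := Finset.card_filter_add_card_filter_not (s := X ×ˢ Y)
      (p := fun p => E p.1 p.2)
    rw [Finset.card_product] at this
    have h2 : c + (((X ×ˢ Y).filter fun p => ¬ E p.1 p.2).card : ℝ) = X.card * Y.card := by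
      rw [hc]; exact_mod_cast this
    linarith [h2]
  have hswapc : (((Y ×ˢ X).filter fun p => ¬ E p.2 p.1).card) =
      (((X ×ˢ Y).filter fun p => ¬ E p.1 p.2).card) := by
    rw [card_filter_prod_eq_sum (fun b a => ¬ E a b) Y X,
      card_filter_prod_eq_sum' (fun a b => ¬ E a b) X Y]
  rcases h with h | h
  · -- sparse case
    have hedge : c < δ * δ * X.card * Y.card := by
      rw [hδ2]
      have := (div_lt_iff₀ (by positivity)).1 h
      calc c < ε * ((X.card : ℝ) * Y.card) := this
        _ = ε * X.card * Y.card := by ring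
    have hXmany := small_degree_many E δ hδ X Y hY0 hedge
    have hedge' : ((((Y ×ˢ X).filter fun p => E p.2 p.1).card : ℝ)) < δ * δ * Y.card * X.card := by
      rw [hswap]
      calc c < δ * δ * X.card * Y.card := hedge
        _ = δ * δ * Y.card * X.card := by ring
    have hYmany := small_degree_many (fun b a => E a b) δ hδ Y X hX0 hedge'
    refine ⟨_, Finset.filter_subset _ X, _, Finset.filter_subset _ Y, hXmany, hYmany, Or.inl ?_⟩
    intro a ha b hb
    rw [Finset.mem_filter] at ha hb
    exact ⟨ha.2, hb.2⟩
  · -- dense case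
    have hedge : ((((X ×ˢ Y).filter fun p => ¬ E p.1 p.2).card : ℝ)) <
        δ * δ * X.card * Y.card := by
      rw [hcompl, hδ2]
      have := (lt_div_iff₀ (by positivity)).1 h
      nlinarith
    have hXmany := small_degree_many (fun a b => ¬ E a b) δ hδ X Y hY0 hedge
    have hedge' : ((((Y ×ˢ X).filter fun p => ¬ E p.2 p.1).card : ℝ)) <
        δ * δ * Y.card * X.card := by
      rw [hswapc]
      calc ((((X ×ˢ Y).filter fun p => ¬ E p.1 p.2).card : ℝ)) < δ * δ * X.card * Y.card := hedge
        _ = δ * δ * Y.card * X.card := by ring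
    have hYmany := small_degree_many (fun b a => ¬ E a b) δ hδ Y X hX0 hedge'
    refine ⟨_, Finset.filter_subset _ X, _, Finset.filter_subset _ Y, hXmany, hYmany, Or.inr ?_⟩
    intro a ha b hb
    rw [Finset.mem_filter] at ha hb
    constructor
    · have hs : ((Y.filter fun y => E a y).card) + ((Y.filter fun y => ¬ E a y).card) = Y.card :=
        Finset.card_filter_add_card_filter_not _
      have hs' : (((Y.filter fun y => E a y).card : ℝ)) + ((Y.filter fun y => ¬ E a y).card) = Y.card := by
        exact_mod_cast hs
      have := ha.2
      linarith
    · have hs : ((X.filter fun x => E x b).card) + ((X.filter fun x => ¬ E x b).card) = X.card :=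
        Finset.card_filter_add_card_filter_not _
      have hs' : (((X.filter fun x => E x b).card : ℝ)) + ((X.filter fun x => ¬ E x b).card) = X.card := by
        exact_mod_cast hs
      have := hb.2
      linarith
end

section
/- Let (V,E) be a finite graph, let ε > 0, and let X, Y ⊆ V be nonempty. If the pair (X,Y) is ε-special in (V,E), then (X,Y) is 2ε-homogeneous in (V,E). -/
open Finset

/-- An `ε`-special pair is `2ε`-homogeneous. -/
theorem special_implies_homogeneous {V : Type} [Fintype V]
    (E : V → V → Prop) [DecidableRel E]
    (hsymm : ∀ a b : V, E a b → E b a)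
    (ε : ℝ) (hε : 0 < ε)
    (X Y : Finset V) (hX : X.Nonempty) (hY : Y.Nonempty)
    (h : IsSpecial E ε X Y) :
    IsHomogeneous E (2 * ε) X Y := by
  classical
  obtain ⟨X', hX'sub, Y', hY'sub, hX'card, hY'card, hcase⟩ := h
  by_cases hd : edgeDensity E X Y < 2 * ε
  · exact Or.inl hd
  push_neg at hd
  right
  have hXpos : (0:ℝ) < X.card := by exact_mod_cast Finset.card_pos.mpr hX
  have hYpos : (0:ℝ) < Y.card := by exact_mod_cast Finset.card_pos.mpr hY
  have key : (((X ×ˢ Y).filter fun p => E p.1 p.2).card : ℝ)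
      = ∑ a ∈ X, ((Y.filter fun y => E a y).card : ℝ) := by
    simp only [Finset.card_filter]
    rw [Finset.sum_product]
    push_cast
    rfl
  have hden_le : edgeDensity E X Y ≤ 1 := by
    unfold edgeDensity
    rw [div_le_one (by positivity)]
    have : ((X ×ˢ Y).filter fun p => E p.1 p.2).card ≤ (X ×ˢ Y).card :=
      Finset.card_filter_le _ _
    calc (((X ×ˢ Y).filter fun p => E p.1 p.2).card : ℝ) ≤ ((X ×ˢ Y).card : ℝ) := by
          exact_mod_cast this
      _ = (X.card : ℝ) * Y.card := by rw [Finset.card_product]; push_cast; ring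
  have hε2 : ε ≤ 1/2 := by linarith
  have hX'ne : X'.Nonempty := by
    rw [← Finset.card_pos]
    have : (0:ℝ) < X'.card := by nlinarith
    exact_mod_cast this
  have hY'ne : Y'.Nonempty := by
    rw [← Finset.card_pos]
    have : (0:ℝ) < Y'.card := by nlinarith
    exact_mod_cast this
  obtain ⟨b0, hb0⟩ := hY'ne
  have hX'le : (X'.card : ℝ) ≤ X.card := by
    exact_mod_cast Finset.card_le_card hX'sub
  have hedges : 2 * ε * (X.card * Y.card) ≤
      (((X ×ˢ Y).filter fun p => E p.1 p.2).card : ℝ) := by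
    rw [edgeDensity, le_div_iff₀ (by positivity)] at hd
    linarith
  cases hcase with
  | inl hsmall =>
    exfalso
    have split : ∑ a ∈ X \ X', ((Y.filter fun y => E a y).card : ℝ)
        + ∑ a ∈ X', ((Y.filter fun y => E a y).card : ℝ)
        = ∑ a ∈ X, ((Y.filter fun y => E a y).card : ℝ) :=
      Finset.sum_sdiff hX'sub
    have b1 : ∑ a ∈ X', ((Y.filter fun y => E a y).card : ℝ)
        < ∑ a ∈ X', ε * Y.card := by
      apply Finset.sum_lt_sum_of_nonempty ⟨_, hX'ne.choose_spec⟩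
      intro a ha
      exact (hsmall a ha b0 hb0).1
    have b1' : ∑ a ∈ X', (ε * (Y.card:ℝ)) = X'.card * (ε * Y.card) := by
      rw [Finset.sum_const, nsmul_eq_mul]
    have b2 : ∑ a ∈ X \ X', ((Y.filter fun y => E a y).card : ℝ)
        ≤ ∑ a ∈ X \ X', (Y.card : ℝ) := by
      apply Finset.sum_le_sum
      intro a _
      exact_mod_cast Finset.card_filter_le _ _
    have b2' : ∑ a ∈ X \ X', (Y.card : ℝ) = (X.card - X'.card) * Y.card := by
      rw [Finset.sum_const, nsmul_eq_mul, Finset.card_sdiff_of_subset hX'sub]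
      push_cast [Finset.card_le_card hX'sub]
      ring
    rw [key] at hedges
    have p1 : (X'.card:ℝ) * (ε * Y.card) ≤ X.card * (ε * Y.card) :=
      mul_le_mul_of_nonneg_right hX'le (by positivity)
    have p2 : ((X.card:ℝ) - X'.card) * Y.card < (ε * X.card) * Y.card :=
      mul_lt_mul_of_pos_right (by linarith) hYpos
    linarith
  | inr hbig =>
    have b1 : ∑ a ∈ X', ((1 - ε) * (Y.card : ℝ))
        < ∑ a ∈ X', ((Y.filter fun y => E a y).card : ℝ) := by
      apply Finset.sum_lt_sum_of_nonempty ⟨_, hX'ne.choose_spec⟩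
      intro a ha
      exact (hbig a ha b0 hb0).1
    have b1' : ∑ a ∈ X', ((1 - ε) * (Y.card:ℝ)) = X'.card * ((1 - ε) * Y.card) := by
      rw [Finset.sum_const, nsmul_eq_mul]
    have b2 : ∑ a ∈ X', ((Y.filter fun y => E a y).card : ℝ)
        ≤ ∑ a ∈ X, ((Y.filter fun y => E a y).card : ℝ) := by
      apply Finset.sum_le_sum_of_subset_of_nonneg hX'sub
      intro a _ _
      positivity
    have hgt : (1 - 2 * ε) * (X.card * Y.card)
        < (((X ×ˢ Y).filter fun p => E p.1 p.2).card : ℝ) := by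
      rw [key]
      have hm : (0:ℝ) < (1 - ε) * Y.card := by nlinarith
      have p1 : ((1 - ε) * (X.card:ℝ)) * ((1 - ε) * Y.card)
          < X'.card * ((1 - ε) * Y.card) :=
        mul_lt_mul_of_pos_right hX'card hm
      have p2 : (1 - 2 * ε) * ((X.card:ℝ) * Y.card)
          ≤ ((1 - ε) * (X.card:ℝ)) * ((1 - ε) * Y.card) := by
        nlinarith [mul_pos hXpos hYpos, sq_nonneg ε]
      linarith
    rw [edgeDensity, gt_iff_lt, lt_div_iff₀ (by positivity)]
    linarith
end

section
/- Let (V,E) be a finite graph, let ε > 0, and let X, Y ⊆ V be nonempty. If the pair (X,Y) is ε-good in (V,E), then (X,Y) is 2√ε-homogeneous in (V,E). -/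
open Finset

/-- The pair `(X,Y)` is `ε`-good: every vertex of `X` has few or almost all of `Y` as
neighbors, and every vertex of `Y` has few or almost all of `X` as neighbors. -/
def IsGoodPair {V : Type} (E : V → V → Prop) [DecidableRel E]
    (ε : ℝ) (X Y : Finset V) : Prop :=
  (∀ a ∈ X, ((Y.filter fun y => E a y).card : ℝ) < ε * (Y.card : ℝ) ∨
            ((Y.filter fun y => E a y).card : ℝ) > (1 - ε) * (Y.card : ℝ)) ∧
  (∀ b ∈ Y, ((X.filter fun x => E x b).card : ℝ) < ε * (X.card : ℝ) ∨
            ((X.filter fun x => E x b).card : ℝ) > (1 - ε) * (X.card : ℝ))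

private lemma card_row {V : Type} (E : V → V → Prop) [DecidableRel E] (X Y : Finset V) :
    ((X ×ˢ Y).filter fun p => E p.1 p.2).card = ∑ a ∈ X, (Y.filter fun y => E a y).card := by
  rw [card_filter, Finset.sum_product]
  exact Finset.sum_congr rfl fun a _ => (card_filter _ _).symm

private lemma card_col {V : Type} (E : V → V → Prop) [DecidableRel E] (X Y : Finset V) :
    ((X ×ˢ Y).filter fun p => E p.1 p.2).card = ∑ b ∈ Y, (X.filter fun x => E x b).card := by
  rw [card_filter, Finset.sum_product_right]
  exact Finset.sum_congr rfl fun b _ => (card_filter _ _).symm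

set_option maxHeartbeats 2000000 in
/-- An `ε`-good pair is `2√ε`-homogeneous. -/
theorem good_pair_implies_homogeneous {V : Type} [Fintype V]
    (E : V → V → Prop) [DecidableRel E]
    (hsymm : ∀ a b : V, E a b → E b a)
    (ε : ℝ) (hε : 0 < ε)
    (X Y : Finset V) (hX : X.Nonempty) (hY : Y.Nonempty)
    (h : IsGoodPair E ε X Y) :
    IsHomogeneous E (2 * Real.sqrt ε) X Y := by
  classical
  set s := Real.sqrt ε with hsdef
  have hs0 : 0 < s := Real.sqrt_pos.2 hε
  have hse : s ^ 2 = ε := Real.sq_sqrt hε.le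
  set n := (X.card : ℝ) with hndef
  set m := (Y.card : ℝ) with hmdef
  have hn : 0 < n := by rw [hndef]; exact_mod_cast Finset.card_pos.2 hX
  have hm : 0 < m := by rw [hmdef]; exact_mod_cast Finset.card_pos.2 hY
  set edges := ((((X ×ˢ Y).filter fun p => E p.1 p.2).card : ℝ)) with hedef
  have hd : edgeDensity E X Y = edges / (n * m) := rfl
  have hrow : edges = ∑ a ∈ X, ((Y.filter fun y => E a y).card : ℝ) := by
    rw [hedef, card_row]; push_cast; ring
  have hcol : edges = ∑ b ∈ Y, ((X.filter fun x => E x b).card : ℝ) := by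
    rw [hedef, card_col]; push_cast; ring
  rcases le_or_gt 1 (2 * s) with hbig | hsmall
  · rcases lt_or_ge (edgeDensity E X Y) (2 * s) with h1 | h1
    · exact Or.inl h1
    · exact Or.inr (by linarith)
  -- Main case : 2√ε < 1
  have hεs : ε ≤ s := by nlinarith
  have hε14 : ε < 1 / 4 := by nlinarith
  set px : V → Prop := fun a => (1 - ε) * m < ((Y.filter fun y => E a y).card : ℝ) with hpx
  set py : V → Prop := fun b => (1 - ε) * n < ((X.filter fun x => E x b).card : ℝ) with hpy
  have hlowX : ∀ a ∈ X.filter fun a => ¬ px a,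
      ((Y.filter fun y => E a y).card : ℝ) < ε * m := by
    intro a ha
    rw [mem_filter] at ha
    exact (h.1 a ha.1).resolve_right ha.2
  have hlowY : ∀ b ∈ Y.filter fun b => ¬ py b,
      ((X.filter fun x => E x b).card : ℝ) < ε * n := by
    intro b hb
    rw [mem_filter] at hb
    exact (h.2 b hb.1).resolve_right hb.2
  by_cases hX2 : (((X.filter px).card : ℝ)) < s * n
  · -- few high-degree vertices in X : density is small
    left
    rw [hd, div_lt_iff₀ (by positivity)]
    have hsplit := Finset.sum_filter_add_sum_filter_not X px
      (fun a => ((Y.filter fun y => E a y).card : ℝ))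
    have h1 : ∑ a ∈ X.filter px, ((Y.filter fun y => E a y).card : ℝ)
        ≤ ((X.filter px).card : ℝ) * m := by
      have := Finset.sum_le_card_nsmul (X.filter px)
        (fun a => ((Y.filter fun y => E a y).card : ℝ)) m
        (fun a _ => by
          show ((Y.filter fun y => E a y).card : ℝ) ≤ m
          rw [hmdef]; exact_mod_cast Finset.card_filter_le Y _)
      simpa [nsmul_eq_mul] using this
    have h2 : ∑ a ∈ X.filter (fun a => ¬ px a), ((Y.filter fun y => E a y).card : ℝ)
        ≤ ((X.filter (fun a => ¬ px a)).card : ℝ) * (ε * m) := by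
      have := Finset.sum_le_card_nsmul (X.filter (fun a => ¬ px a))
        (fun a => ((Y.filter fun y => E a y).card : ℝ)) (ε * m)
        (fun a ha => (hlowX a ha).le)
      simpa [nsmul_eq_mul] using this
    have hc1 : ((X.filter (fun a => ¬ px a)).card : ℝ) ≤ n := by
      rw [hndef]; exact_mod_cast Finset.card_filter_le X _
    have hεm : 0 ≤ ε * m := by positivity
    rw [hrow, ← hsplit]
    nlinarith [mul_lt_mul_of_pos_right hX2 hm, mul_le_mul_of_nonneg_right hc1 hεm,
      mul_le_mul_of_nonneg_right hεs (le_of_lt (mul_pos hn hm))]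
  by_cases hY2 : (((Y.filter py).card : ℝ)) < s * m
  · -- few high-degree vertices in Y : density is small
    left
    rw [hd, div_lt_iff₀ (by positivity)]
    have hsplit := Finset.sum_filter_add_sum_filter_not Y py
      (fun b => ((X.filter fun x => E x b).card : ℝ))
    have h1 : ∑ b ∈ Y.filter py, ((X.filter fun x => E x b).card : ℝ)
        ≤ ((Y.filter py).card : ℝ) * n := by
      have := Finset.sum_le_card_nsmul (Y.filter py)
        (fun b => ((X.filter fun x => E x b).card : ℝ)) n
        (fun b _ => by
          show ((X.filter fun x => E x b).card : ℝ) ≤ n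
          rw [hndef]; exact_mod_cast Finset.card_filter_le X _)
      simpa [nsmul_eq_mul] using this
    have h2 : ∑ b ∈ Y.filter (fun b => ¬ py b), ((X.filter fun x => E x b).card : ℝ)
        ≤ ((Y.filter (fun b => ¬ py b)).card : ℝ) * (ε * n) := by
      have := Finset.sum_le_card_nsmul (Y.filter (fun b => ¬ py b))
        (fun b => ((X.filter fun x => E x b).card : ℝ)) (ε * n)
        (fun b hb => (hlowY b hb).le)
      simpa [nsmul_eq_mul] using this
    have hc1 : ((Y.filter (fun b => ¬ py b)).card : ℝ) ≤ m := by
      rw [hmdef]; exact_mod_cast Finset.card_filter_le Y _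
    have hεn : 0 ≤ ε * n := by positivity
    rw [hcol, ← hsplit]
    nlinarith [mul_lt_mul_of_pos_right hY2 hn, mul_le_mul_of_nonneg_right hc1 hεn,
      mul_le_mul_of_nonneg_right hεs (le_of_lt (mul_pos hn hm))]
  -- Both X and Y have many high-degree vertices : density is large
  push_neg at hX2 hY2
  right
  set X₂ := X.filter px with hX₂def
  set Y₂ := Y.filter py with hY₂def
  set Y₁ := Y.filter (fun b => ¬ py b) with hY₁def
  set y1 := ((Y₁.card : ℝ)) with hy1def
  have hy1nn : 0 ≤ y1 := by positivity
  have hYcard : ((Y₂.card : ℝ)) + y1 = m := by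
    rw [hy1def, hY₂def, hY₁def, hmdef]
    exact_mod_cast Finset.card_filter_add_card_filter_not (s := Y) (p := py)
  set T := ((((X₂ ×ˢ Y₁).filter fun p => E p.1 p.2).card : ℝ)) with hTdef
  have hTcol : T = ∑ b ∈ Y₁, ((X₂.filter fun x => E x b).card : ℝ) := by
    rw [hTdef, card_col]; push_cast; ring
  have hTrow : T = ∑ a ∈ X₂, ((Y₁.filter fun y => E a y).card : ℝ) := by
    rw [hTdef, card_row]; push_cast; ring
  -- upper bound for T
  have hT1 : T ≤ y1 * (ε * n) := by
    rw [hTcol]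
    have := Finset.sum_le_card_nsmul Y₁
      (fun b => ((X₂.filter fun x => E x b).card : ℝ)) (ε * n)
      (fun b hb => by
        have h1 : ((X₂.filter fun x => E x b).card : ℝ)
            ≤ ((X.filter fun x => E x b).card : ℝ) := by
          exact_mod_cast Finset.card_le_card
            (Finset.filter_subset_filter _ (Finset.filter_subset _ _))
        exact h1.trans (hlowY b hb).le)
    simpa [nsmul_eq_mul] using this
  -- lower bound for T
  have hT2 : ((X₂.card : ℝ)) * (y1 - ε * m) ≤ T := by
    rw [hTrow]
    have := Finset.card_nsmul_le_sum X₂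
      (fun a => ((Y₁.filter fun y => E a y).card : ℝ)) (y1 - ε * m)
      (fun a ha => by
        rw [hX₂def, mem_filter] at ha
        have hdeg : (1 - ε) * m < ((Y.filter fun y => E a y).card : ℝ) := ha.2
        have hsub : Y.filter (fun y => E a y) ⊆ Y₂ ∪ Y₁.filter (fun y => E a y) := by
          intro y hy
          rw [mem_filter] at hy
          by_cases hpyy : py y
          · exact Finset.mem_union_left _ (by rw [hY₂def, mem_filter]; exact ⟨hy.1, hpyy⟩)
          · refine Finset.mem_union_right _ ?_
            rw [mem_filter, hY₁def, mem_filter]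
            exact ⟨⟨hy.1, hpyy⟩, hy.2⟩
        have hcard : ((Y.filter fun y => E a y).card : ℝ)
            ≤ ((Y₂.card : ℝ)) + ((Y₁.filter fun y => E a y).card : ℝ) := by
          have h1 := Finset.card_le_card hsub
          have h2 := Finset.card_union_le Y₂ (Y₁.filter (fun y => E a y))
          exact_mod_cast h1.trans h2
        linarith)
    simpa [nsmul_eq_mul] using this
  -- Y₁ is small
  have hY1small : y1 ≤ 2 * ε * m := by
    rcases le_or_gt y1 (ε * m) with h' | h'
    · nlinarith
    · have key : s * n * (y1 - ε * m) ≤ y1 * (ε * n) := by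
        calc s * n * (y1 - ε * m) ≤ ((X₂.card : ℝ)) * (y1 - ε * m) :=
              mul_le_mul_of_nonneg_right hX2 (by linarith)
          _ ≤ T := hT2
          _ ≤ y1 * (ε * n) := hT1
      have h3 : s * (y1 - ε * m) ≤ y1 * ε :=
        le_of_mul_le_mul_left (by nlinarith [key]) hn
      have h4 : y1 - ε * m ≤ y1 * s :=
        le_of_mul_le_mul_left (by nlinarith [h3, hse]) hs0
      nlinarith
  -- density lower bound
  have hsplit := Finset.sum_filter_add_sum_filter_not Y py
    (fun b => ((X.filter fun x => E x b).card : ℝ))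
  have hE1 : ((Y₂.card : ℝ)) * ((1 - ε) * n)
      ≤ ∑ b ∈ Y₂, ((X.filter fun x => E x b).card : ℝ) := by
    have := Finset.card_nsmul_le_sum Y₂
      (fun b => ((X.filter fun x => E x b).card : ℝ)) ((1 - ε) * n)
      (fun b hb => by
        rw [hY₂def, mem_filter] at hb
        exact hb.2.le)
    simpa [nsmul_eq_mul] using this
  have hE2 : (0:ℝ) ≤ ∑ b ∈ Y₁, ((X.filter fun x => E x b).card : ℝ) :=
    Finset.sum_nonneg fun b _ => by positivity
  have hedge : ((Y₂.card : ℝ)) * ((1 - ε) * n) ≤ edges := by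
    rw [hcol, ← hsplit]
    rw [hY₂def] at hE1
    rw [hY₁def] at hE2
    linarith
  rw [hd]
  rw [gt_iff_lt, lt_div_iff₀ (by positivity)]
  have hY₂big : m - 2 * ε * m ≤ ((Y₂.card : ℝ)) := by linarith
  have h1ε : 0 < 1 - ε := by linarith
  have hedge2 : (m - 2 * ε * m) * ((1 - ε) * n) ≤ edges :=
    le_trans (mul_le_mul_of_nonneg_right hY₂big (mul_pos h1ε hn).le) hedge
  have hεsq : (0:ℝ) < ε ^ 2 := by positivity
  have h2s : (0:ℝ) < 2 - 3 * s := by linarith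
  have hprod : (0:ℝ) < s * (2 - 3 * s) := mul_pos hs0 h2s
  have hkey : 0 < 2 * s - 3 * ε + 2 * ε ^ 2 := by
    have hring : 2 * s - 3 * ε + 2 * ε ^ 2 = s * (2 - 3 * s) + 2 * ε ^ 2 := by
      rw [← hse]; ring
    rw [hring]; linarith only [hprod, hεsq]
  have hkey2 := mul_pos (mul_pos hn hm) hkey
  have h0 : (m - 2 * ε * m) * ((1 - ε) * n) - (1 - 2 * s) * (n * m)
      = (n * m) * (2 * s - 3 * ε + 2 * ε ^ 2) := by ring
  linarith only [hedge2, hkey2, h0]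
end

section
/- Let A and B be sets, let R ⊆ A × B be a relation, and let k ≥ 1 be an integer. Assume R is k-stable, i.e., there do not exist a₁,…,a_k ∈ A and b₁,…,b_k ∈ B such that R(aᵢ,bⱼ) holds if and only if i ≤ j. Let p : B → Prop be finitely satisfiable with respect to R, meaning that for every finite subset D ⊆ B there exists a ∈ A such that for all b ∈ D, R(a,b) holds if and only if p(b) holds. Then there exist a₁,…,a_{2k} ∈ A such that for every b ∈ B, p(b) holds if and only if R(aₜ,b) holds for at least k indices t ∈ {1,…,2k}. -/
open Finset

section StableDefAux

variable {A B : Type} (R : A → B → Prop) (p : B → Prop)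

open scoped Classical in
private noncomputable def witAux (g : ℕ → A) (n : ℕ) : Finset B :=
  (Finset.range (n + 1)).powerset.biUnion fun S =>
    (if h : ∃ b, ¬ p b ∧ ∀ j ∈ S, R (g j) b then {h.choose} else ∅) ∪
    (if h : ∃ b, p b ∧ ∀ j ∈ S, ¬ R (g j) b then {h.choose} else ∅)

open scoped Classical in
private noncomputable def stAux (f : Finset B → A) : ℕ → Finset B × (ℕ → A)
  | 0 => (∅, fun _ => f ∅)
  | n + 1 =>
    let s := stAux f n
    let g : ℕ → A := fun j => if j = n then f s.1 else s.2 j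
    (s.1 ∪ witAux R p g n, g)

private lemma stAux_apply (f : Finset B → A) :
    ∀ n j, j < n → (stAux R p f n).2 j = f (stAux R p f j).1 := by
  intro n
  induction n with
  | zero => intro j hj; omega
  | succ n ih =>
    intro j hj
    show (if j = n then f (stAux R p f n).1 else (stAux R p f n).2 j) = _
    by_cases hjn : j = n
    · subst hjn; rw [if_pos rfl]
    · rw [if_neg hjn]; exact ih j (by omega)

private lemma stAux_mono (f : Finset B → A) :
    ∀ {m n : ℕ}, m ≤ n → (stAux R p f m).1 ⊆ (stAux R p f n).1 := by
  classical
  intro m n h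
  induction n with
  | zero =>
    have : m = 0 := by omega
    subst this; exact Finset.Subset.refl _
  | succ n ih =>
    by_cases hm : m = n + 1
    · subst hm; exact Finset.Subset.refl _
    · have hmn : m ≤ n := by omega
      refine (ih hmn).trans ?_
      show (stAux R p f n).1 ⊆ (stAux R p f n).1 ∪ _
      exact Finset.subset_union_left

/-- If all rows indexed by a nonempty `S` (all `< n`) jointly vote "yes" at some `¬p`-point,
then some such point belongs to the accumulated set at stage `n`. -/
private lemma witF_mem (f : Finset B → A) {n : ℕ} {S : Finset ℕ} (hS : S.Nonempty)
    (hlt : ∀ j ∈ S, j < n)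
    (hex : ∃ b, ¬ p b ∧ ∀ j ∈ S, R (f (stAux R p f j).1) b) :
    ∃ w, w ∈ (stAux R p f n).1 ∧ ¬ p w ∧ ∀ j ∈ S, R (f (stAux R p f j).1) w := by
  classical
  set M := S.max' hS with hM
  have hMS : M ∈ S := S.max'_mem hS
  have hMn : M < n := hlt M hMS
  have hg : ∀ j ∈ S, (stAux R p f (M + 1)).2 j = f (stAux R p f j).1 := by
    intro j hj
    exact stAux_apply R p f (M + 1) j (Nat.lt_succ_of_le (S.le_max' j hj))
  have hex' : ∃ b, ¬ p b ∧ ∀ j ∈ S, R ((stAux R p f (M + 1)).2 j) b := by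
    obtain ⟨b0, h1, h2⟩ := hex
    exact ⟨b0, h1, fun j hj => by rw [hg j hj]; exact h2 j hj⟩
  have hwmem : hex'.choose ∈ witAux R p ((stAux R p f (M + 1)).2) M := by
    apply Finset.mem_biUnion.mpr
    refine ⟨S, Finset.mem_powerset.mpr
      (fun j hj => Finset.mem_range.mpr (Nat.lt_succ_of_le (S.le_max' j hj))), ?_⟩
    apply Finset.mem_union_left
    rw [dif_pos hex']
    exact Finset.mem_singleton_self _
  have hmem1 : hex'.choose ∈ (stAux R p f (M + 1)).1 := by
    have heq : (stAux R p f (M + 1)).1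
        = (stAux R p f M).1 ∪ witAux R p ((stAux R p f (M + 1)).2) M := rfl
    rw [heq]
    exact Finset.mem_union_right _ hwmem
  obtain ⟨hp1, hp2⟩ := hex'.choose_spec
  exact ⟨hex'.choose, stAux_mono R p f (Nat.succ_le_of_lt hMn) hmem1, hp1,
    fun j hj => by rw [← hg j hj]; exact hp2 j hj⟩

/-- Dual of `witF_mem` for `p`-points and joint "no" votes. -/
private lemma witT_mem (f : Finset B → A) {n : ℕ} {S : Finset ℕ} (hS : S.Nonempty)
    (hlt : ∀ j ∈ S, j < n)
    (hex : ∃ b, p b ∧ ∀ j ∈ S, ¬ R (f (stAux R p f j).1) b) :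
    ∃ w, w ∈ (stAux R p f n).1 ∧ p w ∧ ∀ j ∈ S, ¬ R (f (stAux R p f j).1) w := by
  classical
  set M := S.max' hS with hM
  have hMS : M ∈ S := S.max'_mem hS
  have hMn : M < n := hlt M hMS
  have hg : ∀ j ∈ S, (stAux R p f (M + 1)).2 j = f (stAux R p f j).1 := by
    intro j hj
    exact stAux_apply R p f (M + 1) j (Nat.lt_succ_of_le (S.le_max' j hj))
  have hex' : ∃ b, p b ∧ ∀ j ∈ S, ¬ R ((stAux R p f (M + 1)).2 j) b := by
    obtain ⟨b0, h1, h2⟩ := hex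
    exact ⟨b0, h1, fun j hj => by rw [hg j hj]; exact h2 j hj⟩
  have hwmem : hex'.choose ∈ witAux R p ((stAux R p f (M + 1)).2) M := by
    apply Finset.mem_biUnion.mpr
    refine ⟨S, Finset.mem_powerset.mpr
      (fun j hj => Finset.mem_range.mpr (Nat.lt_succ_of_le (S.le_max' j hj))), ?_⟩
    apply Finset.mem_union_right
    rw [dif_pos hex']
    exact Finset.mem_singleton_self _
  have hmem1 : hex'.choose ∈ (stAux R p f (M + 1)).1 := by
    have heq : (stAux R p f (M + 1)).1
        = (stAux R p f M).1 ∪ witAux R p ((stAux R p f (M + 1)).2) M := rfl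
    rw [heq]
    exact Finset.mem_union_right _ hwmem
  obtain ⟨hp1, hp2⟩ := hex'.choose_spec
  exact ⟨hex'.choose, stAux_mono R p f (Nat.succ_le_of_lt hMn) hmem1, hp1,
    fun j hj => by rw [← hg j hj]; exact hp2 j hj⟩

/-- No `¬p`-point can receive `k` (wrong) "yes" votes from the constructed rows. -/
private lemma ladderF {k : ℕ}
    (hstable : ¬ ∃ (a : Fin k → A) (b : Fin k → B), ∀ i j, R (a i) (b j) ↔ i ≤ j)
    (f : Finset B → A) (hf : ∀ D : Finset B, ∀ b ∈ D, R (f D) b ↔ p b)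
    (b : B) (hb : ¬ p b) (i : Fin k → ℕ) (hi : StrictMono i)
    (hw : ∀ s, R (f (stAux R p f (i s)).1) b) : False := by
  classical
  have hwit : ∀ (t : Fin k) (h : (t : ℕ) + 1 < k),
      ∃ w, w ∈ (stAux R p f (i ⟨(t : ℕ) + 1, h⟩)).1 ∧ ¬ p w ∧
        ∀ j ∈ (Finset.univ.filter fun s : Fin k => s ≤ t).image (fun s => i s),
          R (f (stAux R p f j).1) w := by
    intro t h
    apply witF_mem R p f
    · exact ⟨i t, Finset.mem_image.mpr
        ⟨t, Finset.mem_filter.mpr ⟨Finset.mem_univ _, le_refl t⟩, rfl⟩⟩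
    · intro j hj
      obtain ⟨s, hs, rfl⟩ := Finset.mem_image.mp hj
      have hst : (s : ℕ) ≤ (t : ℕ) := (Finset.mem_filter.mp hs).2
      exact hi (show s < ⟨(t : ℕ) + 1, h⟩ from by
        rw [Fin.lt_def]; exact Nat.lt_succ_of_le hst)
    · exact ⟨b, hb, fun j hj => by
        obtain ⟨s, _, rfl⟩ := Finset.mem_image.mp hj
        exact hw s⟩
  refine hstable ⟨fun s => f (stAux R p f (i s)).1,
    fun t => if h : (t : ℕ) + 1 < k then (hwit t h).choose else b, fun s t => ?_⟩
  show R (f (stAux R p f (i s)).1)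
      (if h : (t : ℕ) + 1 < k then (hwit t h).choose else b) ↔ s ≤ t
  by_cases h : (t : ℕ) + 1 < k
  · rw [dif_pos h]
    obtain ⟨hwmem, hwp, hwall⟩ := (hwit t h).choose_spec
    by_cases hst : s ≤ t
    · refine iff_of_true ?_ hst
      exact hwall (i s) (Finset.mem_image.mpr
        ⟨s, Finset.mem_filter.mpr ⟨Finset.mem_univ _, hst⟩, rfl⟩)
    · refine iff_of_false ?_ hst
      have hts : (t : ℕ) + 1 ≤ (s : ℕ) := by
        have := Fin.lt_def.mp (lt_of_not_ge hst)
        omega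
      have hmono : (stAux R p f (i ⟨(t : ℕ) + 1, h⟩)).1 ⊆ (stAux R p f (i s)).1 :=
        stAux_mono R p f (hi.monotone (show (⟨(t : ℕ) + 1, h⟩ : Fin k) ≤ s from
          by rw [Fin.le_def]; exact hts))
      intro hR
      exact hwp ((hf _ _ (hmono hwmem)).mp hR)
  · rw [dif_neg h]
    refine iff_of_true (hw s) ?_
    rw [Fin.le_def]
    have := s.isLt
    have := t.isLt
    omega

/-- No `p`-point can receive `k + 1` (wrong) "no" votes from the constructed rows. -/
private lemma ladderT {k : ℕ} (hk : 1 ≤ k)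
    (hstable : ¬ ∃ (a : Fin k → A) (b : Fin k → B), ∀ i j, R (a i) (b j) ↔ i ≤ j)
    (f : Finset B → A) (hf : ∀ D : Finset B, ∀ b ∈ D, R (f D) b ↔ p b)
    (b : B) (hb : p b) (i : Fin (k + 1) → ℕ) (hi : StrictMono i)
    (hw : ∀ s, ¬ R (f (stAux R p f (i s)).1) b) : False := by
  classical
  have hwit : ∀ (t : Fin k),
      ∃ w, w ∈ (stAux R p f (i ⟨(t : ℕ) + 1, Nat.succ_lt_succ t.isLt⟩)).1 ∧ p w ∧
        ∀ j ∈ (Finset.univ.filter fun s : Fin (k + 1) => (s : ℕ) ≤ (t : ℕ)).image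
            (fun s => i s),
          ¬ R (f (stAux R p f j).1) w := by
    intro t
    apply witT_mem R p f
    · refine ⟨i ⟨(t : ℕ), Nat.lt_succ_of_lt t.isLt⟩, Finset.mem_image.mpr
        ⟨⟨(t : ℕ), Nat.lt_succ_of_lt t.isLt⟩,
          Finset.mem_filter.mpr ⟨Finset.mem_univ _, le_refl _⟩, rfl⟩⟩
    · intro j hj
      obtain ⟨s, hs, rfl⟩ := Finset.mem_image.mp hj
      have hst : (s : ℕ) ≤ (t : ℕ) := (Finset.mem_filter.mp hs).2
      exact hi (show s < ⟨(t : ℕ) + 1, Nat.succ_lt_succ t.isLt⟩ from by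
        rw [Fin.lt_def]; exact Nat.lt_succ_of_le hst)
    · exact ⟨b, hb, fun j hj => by
        obtain ⟨s, _, rfl⟩ := Finset.mem_image.mp hj
        exact hw s⟩
  -- a point is voted "no" by rows `i s` with `s ≤ t`, and "yes" (correctly) by later rows
  have keyF : ∀ (s : Fin (k + 1)) (t : Fin k), (s : ℕ) ≤ (t : ℕ) →
      ¬ R (f (stAux R p f (i s)).1) ((hwit t).choose) := by
    intro s t hst
    obtain ⟨hwmem, hwp, hwall⟩ := (hwit t).choose_spec
    exact hwall (i s) (Finset.mem_image.mpr
      ⟨s, Finset.mem_filter.mpr ⟨Finset.mem_univ _, hst⟩, rfl⟩)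
  have keyT : ∀ (s : Fin (k + 1)) (t : Fin k), (t : ℕ) < (s : ℕ) →
      R (f (stAux R p f (i s)).1) ((hwit t).choose) := by
    intro s t hts
    obtain ⟨hwmem, hwp, hwall⟩ := (hwit t).choose_spec
    have hmono : (stAux R p f (i ⟨(t : ℕ) + 1, Nat.succ_lt_succ t.isLt⟩)).1
        ⊆ (stAux R p f (i s)).1 :=
      stAux_mono R p f (hi.monotone
        (show (⟨(t : ℕ) + 1, Nat.succ_lt_succ t.isLt⟩ : Fin (k + 1)) ≤ s from
          by rw [Fin.le_def]; exact hts))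
    exact (hf _ _ (hmono hwmem)).mpr hwp
  refine hstable ⟨fun ρ => f (stAux R p f (i ⟨k - (ρ : ℕ), Nat.lt_succ_of_le (Nat.sub_le _ _)⟩)).1,
    fun γ => (hwit ⟨k - 1 - (γ : ℕ), by omega⟩).choose, fun ρ γ => ?_⟩
  show R (f (stAux R p f (i ⟨k - (ρ : ℕ), Nat.lt_succ_of_le (Nat.sub_le _ _)⟩)).1)
      ((hwit ⟨k - 1 - (γ : ℕ), by omega⟩).choose) ↔ ρ ≤ γ
  have hρ := ρ.isLt
  have hγ := γ.isLt
  by_cases hle : ρ ≤ γ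
  · refine iff_of_true ?_ hle
    have hv : (ρ : ℕ) ≤ (γ : ℕ) := Fin.le_def.mp hle
    exact keyT _ _ (by simp only []; omega)
  · refine iff_of_false ?_ hle
    have hv : (γ : ℕ) < (ρ : ℕ) := Fin.lt_def.mp (lt_of_not_ge hle)
    exact keyF _ _ (by simp only []; omega)

/-- Extract a strictly monotone enumeration of `m` elements of a set of `ncard ≥ m`. -/
private lemma exists_strictMono_mem {m n : ℕ} (S : Set (Fin n)) (h : m ≤ S.ncard) :
    ∃ e : Fin m → Fin n, StrictMono e ∧ ∀ s, e s ∈ S := by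
  classical
  have hc : m ≤ S.toFinset.card := by rwa [Set.ncard_eq_toFinset_card'] at h
  obtain ⟨F, hF, hFc⟩ := Finset.exists_subset_card_eq hc
  exact ⟨F.orderEmbOfFin hFc, (F.orderEmbOfFin hFc).strictMono,
    fun s => Set.mem_toFinset.mp (hF (F.orderEmbOfFin_mem hFc s))⟩

end StableDefAux

/-- Definability of finitely satisfiable predicates (types) over a `k`-stable relation:
if `p : B → Prop` is finitely satisfiable with respect to `R`, then `p` is given by a
majority vote among `2k` elements of `A`. -/
theorem stable_type_definability {A B : Type} (R : A → B → Prop) (k : ℕ) (hk : 1 ≤ k)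
    (hstable : ¬ ∃ (a : Fin k → A) (b : Fin k → B), ∀ i j, R (a i) (b j) ↔ i ≤ j)
    (p : B → Prop)
    (hfs : ∀ D : Finset B, ∃ a : A, ∀ b ∈ D, (R a b ↔ p b)) :
    ∃ a : Fin (2 * k) → A, ∀ b : B,
      (p b ↔ k ≤ {t : Fin (2 * k) | R (a t) b}.ncard) := by
  classical
  choose f hf using hfs
  refine ⟨fun t => f (stAux R p f (t : ℕ)).1, fun b => ?_⟩
  show p b ↔ k ≤ {t : Fin (2 * k) | R (f (stAux R p f (t : ℕ)).1) b}.ncard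
  constructor
  · intro hpb
    have h1 : {t : Fin (2 * k) | ¬ R (f (stAux R p f (t : ℕ)).1) b}.ncard ≤ k := by
      by_contra hcon
      push_neg at hcon
      obtain ⟨e, he, hes⟩ := exists_strictMono_mem _ (show k + 1 ≤ _ from hcon)
      refine ladderT R p hk hstable f hf b hpb (fun s => ((e s : Fin (2 * k)) : ℕ)) ?_ ?_
      · intro x y hxy
        exact he hxy
      · intro s
        exact hes s
    have h2 := Set.ncard_add_ncard_compl {t : Fin (2 * k) | R (f (stAux R p f (t : ℕ)).1) b}
    have h3 : {t : Fin (2 * k) | R (f (stAux R p f (t : ℕ)).1) b}ᶜ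
        = {t : Fin (2 * k) | ¬ R (f (stAux R p f (t : ℕ)).1) b} := rfl
    rw [h3] at h2
    have h4 : Nat.card (Fin (2 * k)) = 2 * k := by simp
    omega
  · intro hcard
    by_contra hpb
    obtain ⟨e, he, hes⟩ := exists_strictMono_mem _ hcard
    refine ladderF R p hstable f hf b hpb (fun s => ((e s : Fin (2 * k)) : ℕ)) ?_ ?_
    · intro x y hxy
      exact he hxy
    · intro s
      exact hes s
end

section
/- Let A and B be sets, let R ⊆ A × B be a relation, and let k ≥ 1 be an integer. Assume R is k-stable, i.e., there do not exist a₁,…,a_k ∈ A and b₁,…,b_k ∈ B such that R(aᵢ,bⱼ) holds if and only if i ≤ j. Then there is an injective map from the set of all predicates p : B → Prop that are finitely satisfiable with respect to R into the set of 2k-tuples of elements of A. In particular, the cardinality of the set of finitely satisfiable predicates on B is at most the cardinality of A^{2k}. -/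
open Finset

/-- Generic construction of an infinite sequence by repeatedly extending a good list. -/
lemma exists_seq_chain {α : Type} (Good : List α → Prop) (h0 : Good [])
    (hstep : ∀ l, Good l → ∃ x, Good (l ++ [x])) :
    ∃ f : ℕ → α, ∀ n, Good (List.ofFn fun i : Fin n => f i) := by
  classical
  let next : {l : List α // Good l} → {l : List α // Good l} := fun l =>
    ⟨l.1 ++ [Classical.choose (hstep l.1 l.2)], Classical.choose_spec (hstep l.1 l.2)⟩
  let hist : ℕ → {l : List α // Good l} := fun n => next^[n] ⟨[], h0⟩
  have hsucc : ∀ n, hist (n + 1) = next (hist n) := by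
    intro n
    simp only [hist, Function.iterate_succ_apply']
  let f : ℕ → α := fun n => Classical.choose (hstep (hist n).1 (hist n).2)
  have hform : ∀ n, (hist n).1 = List.ofFn fun i : Fin n => f i := by
    intro n
    induction n with
    | zero => simp [hist]
    | succ n ih =>
      rw [hsucc n]
      show (hist n).1 ++ [f n] = _
      rw [ih, List.ofFn_succ']
      simp [List.concat_eq_append, Fin.last]
  refine ⟨f, fun n => ?_⟩
  rw [← hform]
  exact (hist n).2

/-- Half of infinite Ramsey: extract a monochromatic subsequence inside a
set belonging to an ultrafilter relative to which the coloring `d` is large. -/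
lemma ramsey_half (d : ℕ → ℕ → Prop) (T : Set ℕ)
    (hT : ∀ x ∈ T, {y | d x y} ∈ Filter.hyperfilter ℕ) (hTU : T ∈ Filter.hyperfilter ℕ) :
    ∃ g : ℕ → ℕ, StrictMono g ∧ ∀ i j, i < j → d (g i) (g j) := by
  classical
  set U := Filter.hyperfilter ℕ with hU
  have key : ∀ l : List ℕ, (l.Pairwise (fun x y => x < y ∧ d x y) ∧ ∀ x ∈ l, x ∈ T) →
      ∃ z, (l ++ [z]).Pairwise (fun x y => x < y ∧ d x y) ∧ ∀ x ∈ l ++ [z], x ∈ T := by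
    intro l hl
    have hS : (T ∩ ⋂ x ∈ l.toFinset, {y | d x y}) ∈ U := by
      refine Filter.inter_mem hTU ?_
      refine (Filter.biInter_finset_mem _).2 ?_
      intro x hx
      exact hT x (hl.2 x (List.mem_toFinset.1 hx))
    have hinf : (T ∩ ⋂ x ∈ l.toFinset, {y | d x y}).Infinite := by
      intro hfin
      exact Set.Finite.notMem_hyperfilter hfin hS
    -- pick an element bigger than everything in l
    obtain ⟨z, hzS, hzgt⟩ : ∃ z ∈ T ∩ ⋂ x ∈ l.toFinset, {y | d x y}, ∀ x ∈ l, x < z := by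
      by_contra hcon
      push_neg at hcon
      apply hinf
      apply Set.Finite.subset (Set.finite_Iic (l.toFinset.sup id))
      intro z hz
      obtain ⟨x, hxl, hxz⟩ := hcon z hz
      exact le_trans hxz (Finset.le_sup (f := id) (List.mem_toFinset.2 hxl))
    refine ⟨z, ?_, ?_⟩
    · rw [List.pairwise_append]
      refine ⟨hl.1, List.pairwise_singleton _ _, ?_⟩
      intro x hx z' hz'
      rw [List.mem_singleton] at hz'
      subst hz'
      refine ⟨hzgt x hx, ?_⟩
      have := hzS.2
      simp only [Set.mem_iInter] at this
      exact this x (List.mem_toFinset.2 hx)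
    · intro x hx
      rcases List.mem_append.1 hx with h | h
      · exact hl.2 x h
      · rw [List.mem_singleton] at h; subst h; exact hzS.1
  obtain ⟨f, hf⟩ := exists_seq_chain _ ⟨List.Pairwise.nil, by simp⟩ key
  have hpw : ∀ i j, i < j → f i < f j ∧ d (f i) (f j) := by
    intro i j hij
    have := (hf (j + 1)).1
    rw [List.pairwise_iff_getElem] at this
    have h2 := this i j (by rw [List.length_ofFn]; omega) (by rw [List.length_ofFn]; omega) hij
    simp only [List.getElem_ofFn] at h2
    exact h2
  exact ⟨f, fun i j hij => (hpw i j hij).1, fun i j hij => (hpw i j hij).2⟩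

/-- Infinite Ramsey theorem for pairs with two colors, in subsequence form. -/
lemma infinite_ramsey_pairs (c : ℕ → ℕ → Prop) :
    ∃ g : ℕ → ℕ, StrictMono g ∧
      ((∀ i j, i < j → c (g i) (g j)) ∨ (∀ i j, i < j → ¬ c (g i) (g j))) := by
  classical
  set U := Filter.hyperfilter ℕ with hU
  set T : Set ℕ := {x | {y | c x y} ∈ U} with hT
  rcases U.mem_or_compl_mem T with h | h
  · obtain ⟨g, hg, hmono⟩ := ramsey_half c T (fun x hx => hx) h
    exact ⟨g, hg, Or.inl hmono⟩
  · obtain ⟨g, hg, hmono⟩ := ramsey_half (fun x y => ¬ c x y) Tᶜ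
      (fun x hx => (Ultrafilter.compl_mem_iff_notMem.2 hx : {y | c x y}ᶜ ∈ U)) h
    exact ⟨g, hg, Or.inr hmono⟩

/-- The key lemma: over a `k`-stable relation, every finitely satisfiable predicate
factors through the `R`-pattern of finitely many elements of `A`. -/
lemma exists_finite_support {A B : Type} (R : A → B → Prop) (k : ℕ)
    (hstable : ¬ ∃ (a : Fin k → A) (b : Fin k → B), ∀ i j, R (a i) (b j) ↔ i ≤ j)
    (p : B → Prop) (hp : ∀ D : Finset B, ∃ a : A, ∀ b ∈ D, (R a b ↔ p b)) :
    ∃ (m : ℕ) (v : Fin m → A), ∀ b b', (∀ i, R (v i) b ↔ R (v i) b') → (p b ↔ p b') := by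
  classical
  by_contra hcon
  push_neg at hcon
  have hbad : ∀ (m : ℕ) (v : Fin m → A), ∃ b b',
      (∀ i, R (v i) b ↔ R (v i) b') ∧ p b ∧ ¬ p b' := by
    intro m v
    obtain ⟨b, b', hagree, hne⟩ := hcon m v
    rcases hne with ⟨h1, h2⟩ | ⟨h1, h2⟩
    · exact ⟨b, b', hagree, h1, h2⟩
    · exact ⟨b', b, fun i => (hagree i).symm, h2, h1⟩
  set Good : List (A × B × B) → Prop := fun l =>
    (∀ x ∈ l, p x.2.1 ∧ ¬ p x.2.2) ∧
    (∀ (i j : ℕ) (hi : i < l.length) (hj : j < l.length), j ≤ i →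
       ((R (l[i]'hi).1 (l[j]'hj).2.1 ↔ p (l[j]'hj).2.1) ∧
        (R (l[i]'hi).1 (l[j]'hj).2.2 ↔ p (l[j]'hj).2.2))) ∧
    (∀ (i j : ℕ) (hi : i < l.length) (hj : j < l.length), i < j →
       (R (l[i]'hi).1 (l[j]'hj).2.1 ↔ R (l[i]'hi).1 (l[j]'hj).2.2)) with hGood
  have h0 : Good [] := by
    refine ⟨?_, ?_, ?_⟩
    · intro x hx; exact absurd hx List.not_mem_nil
    · intro i j hi hj _; simp at hi
    · intro i j hi hj _; simp at hi
  have hstep : ∀ l, Good l → ∃ x, Good (l ++ [x]) := by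
    intro l hl
    obtain ⟨b, b', hagree, hpb, hpb'⟩ :=
      hbad l.length (fun i : Fin l.length => (l.get i).1)
    set D : Finset B :=
      ((l.map (fun x => x.2.1)).toFinset ∪ (l.map (fun x => x.2.2)).toFinset) ∪ {b, b'} with hD
    obtain ⟨a, ha⟩ := hp D
    have hbD : b ∈ D := by simp [hD]
    have hb'D : b' ∈ D := by simp [hD]
    have hmem1 : ∀ (j : ℕ) (hj : j < l.length), (l[j]'hj).2.1 ∈ D := by
      intro j hj
      simp only [hD, Finset.mem_union, List.mem_toFinset, List.mem_map]
      exact Or.inl (Or.inl ⟨l[j]'hj, List.getElem_mem hj, rfl⟩)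
    have hmem2 : ∀ (j : ℕ) (hj : j < l.length), (l[j]'hj).2.2 ∈ D := by
      intro j hj
      simp only [hD, Finset.mem_union, List.mem_toFinset, List.mem_map]
      exact Or.inl (Or.inr ⟨l[j]'hj, List.getElem_mem hj, rfl⟩)
    have hlen : (l ++ [(a, b, b')]).length = l.length + 1 := by simp
    have hgetlt : ∀ (i : ℕ) (hi : i < l.length),
        (l ++ [(a, b, b')])[i]'(by omega) = l[i]'hi := fun i hi =>
      List.getElem_append_left hi
    have hgetlast : (l ++ [(a, b, b')])[l.length]'(by omega) = (a, b, b') :=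
      List.getElem_concat_length rfl _
    refine ⟨(a, b, b'), ?_, ?_, ?_⟩
    · intro x hx
      rcases List.mem_append.1 hx with h | h
      · exact hl.1 x h
      · rw [List.mem_singleton] at h; subst h; exact ⟨hpb, hpb'⟩
    · intro i j hi hj hji
      rw [hlen] at hi hj
      by_cases hi' : i < l.length
      · have hj' : j < l.length := lt_of_le_of_lt hji hi'
        rw [hgetlt i hi', hgetlt j hj']
        exact hl.2.1 i j hi' hj' hji
      · have hi2 : i = l.length := by omega
        subst hi2
        rw [hgetlast]
        by_cases hj' : j < l.length
        · rw [hgetlt j hj']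
          exact ⟨ha _ (hmem1 j hj'), ha _ (hmem2 j hj')⟩
        · have hj2 : j = l.length := by omega
          subst hj2
          rw [hgetlast]
          exact ⟨ha b hbD, ha b' hb'D⟩
    · intro i j hi hj hij
      rw [hlen] at hi hj
      by_cases hj' : j < l.length
      · have hi' : i < l.length := lt_trans hij hj'
        rw [hgetlt i hi', hgetlt j hj']
        exact hl.2.2 i j hi' hj' hij
      · have hj2 : j = l.length := by omega
        subst hj2
        have hi' : i < l.length := hij
        rw [hgetlast, hgetlt i hi']
        have := hagree ⟨i, hi'⟩
        simpa using this
  obtain ⟨f, hf⟩ := exists_seq_chain Good h0 hstep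
  set a : ℕ → A := fun n => (f n).1 with ha_def
  set s : ℕ → B := fun n => (f n).2.1 with hs_def
  set t : ℕ → B := fun n => (f n).2.2 with ht_def
  have hofLen : ∀ n, (List.ofFn fun i : Fin n => f i).length = n :=
    fun n => List.length_ofFn
  have F1 : ∀ n, p (s n) ∧ ¬ p (t n) := by
    intro n
    exact (hf (n + 1)).1 (f n) (List.mem_ofFn.2 ⟨⟨n, n.lt_succ_self⟩, rfl⟩)
  have F2 : ∀ i j, j ≤ i → ((R (a i) (s j) ↔ p (s j)) ∧ (R (a i) (t j) ↔ p (t j))) := by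
    intro i j hji
    have h2 := (hf (i + 1)).2.1 i j (by rw [hofLen]; omega) (by rw [hofLen]; omega) hji
    simp only [List.getElem_ofFn] at h2
    exact h2
  have F3 : ∀ i j, i < j → (R (a i) (s j) ↔ R (a i) (t j)) := by
    intro i j hij
    have h3 := (hf (j + 1)).2.2 i j (by rw [hofLen]; omega) (by rw [hofLen]; omega) hij
    simp only [List.getElem_ofFn] at h3
    exact h3
  obtain ⟨g, hg, hc | hc⟩ := infinite_ramsey_pairs (fun x y => R (a x) (s y))
  · refine hstable ⟨fun i => a (g i.val), fun j => t (g (j.val + 1)), ?_⟩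
    intro i j
    by_cases hij : i ≤ j
    · have hij' : (i : ℕ) ≤ (j : ℕ) := hij
      have h1 : R (a (g i.val)) (s (g (j.val + 1))) := hc i.val (j.val + 1) (by omega)
      have h3 := F3 (g i.val) (g (j.val + 1)) (hg (show i.val < j.val + 1 by omega))
      exact iff_of_true (h3.1 h1) hij
    · have hij' : (j : ℕ) < (i : ℕ) := Fin.lt_iff_val_lt_val.mp (not_le.mp hij)
      have h2 := (F2 (g i.val) (g (j.val + 1)) (hg.monotone (by omega))).2
      have h4 := (F1 (g (j.val + 1))).2
      exact iff_of_false (fun hR => h4 (h2.mp hR)) hij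
  · refine hstable ⟨fun i => a (g (k - 1 - i.val)), fun j => s (g (k - 1 - j.val)), ?_⟩
    intro i j
    have hik : (i : ℕ) < k := i.isLt
    have hjk : (j : ℕ) < k := j.isLt
    by_cases hij : i ≤ j
    · have hij' : (i : ℕ) ≤ (j : ℕ) := hij
      have hle : k - 1 - j.val ≤ k - 1 - i.val := by omega
      have h2 := (F2 (g (k - 1 - i.val)) (g (k - 1 - j.val)) (hg.monotone hle)).1
      have h4 := (F1 (g (k - 1 - j.val))).1
      exact iff_of_true (h2.mpr h4) hij
    · have hij' : (j : ℕ) < (i : ℕ) := Fin.lt_iff_val_lt_val.mp (not_le.mp hij)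
      have hlt : k - 1 - i.val < k - 1 - j.val := by omega
      have h5 := hc (k - 1 - i.val) (k - 1 - j.val) hlt
      exact iff_of_false h5 hij

/-- Counting types over a `k`-stable relation: the finitely satisfiable predicates on `B`
inject into `2k`-tuples from `A`; in particular there are at most `|A^(2k)|` many of them. -/
theorem stable_type_counting {A B : Type} (R : A → B → Prop) (k : ℕ) (hk : 1 ≤ k)
    (hstable : ¬ ∃ (a : Fin k → A) (b : Fin k → B), ∀ i j, R (a i) (b j) ↔ i ≤ j) :
    (∃ f : {p : B → Prop // ∀ D : Finset B, ∃ a : A, ∀ b ∈ D, (R a b ↔ p b)} →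
           (Fin (2 * k) → A), Function.Injective f) ∧
    Cardinal.mk {p : B → Prop // ∀ D : Finset B, ∃ a : A, ∀ b ∈ D, (R a b ↔ p b)} ≤
      Cardinal.mk (Fin (2 * k) → A) := by
  classical
  have hmk : Cardinal.mk {p : B → Prop // ∀ D : Finset B, ∃ a : A, ∀ b ∈ D, (R a b ↔ p b)} ≤
      Cardinal.mk (Fin (2 * k) → A) := by
    cases finite_or_infinite A with
    | inl hfin =>
      have glob : ∀ p : {p : B → Prop // ∀ D : Finset B, ∃ a : A, ∀ b ∈ D, (R a b ↔ p b)},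
          ∃ a : A, ∀ b, R a b ↔ p.1 b := by
        intro ⟨p, hp⟩
        by_contra hno
        push_neg at hno
        have := Fintype.ofFinite A
        choose w hw using hno
        obtain ⟨a, haD⟩ := hp (Finset.univ.image w)
        have hmem : w a ∈ Finset.univ.image w := Finset.mem_image_of_mem w (Finset.mem_univ a)
        rcases hw a with ⟨h1, h2⟩ | ⟨h1, h2⟩
        · exact h2 ((haD (w a) hmem).mp h1)
        · exact h1 ((haD (w a) hmem).mpr h2)
      apply Cardinal.mk_le_of_injective
        (f := fun p (_ : Fin (2 * k)) => Classical.choose (glob p))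
      intro p q hpq
      have hval : Classical.choose (glob p) = Classical.choose (glob q) :=
        congrFun hpq ⟨0, by omega⟩
      apply Subtype.ext
      funext b
      have hp := Classical.choose_spec (glob p) b
      have hq := Classical.choose_spec (glob q) b
      rw [hval] at hp
      exact propext (hp.symm.trans hq)
    | inr hinf =>
      have hkey := fun (p : {p : B → Prop // ∀ D : Finset B, ∃ a : A, ∀ b ∈ D, (R a b ↔ p b)}) =>
        exists_finite_support R k hstable p.1 p.2
      choose m v hv using hkey
      let Code := Σ n : ℕ, (Fin n → A) × ((Fin n → Prop) → Prop)
      let code : {p : B → Prop // ∀ D : Finset B, ∃ a : A, ∀ b ∈ D, (R a b ↔ p b)} → Code :=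
        fun p => ⟨m p, v p, fun w => ∃ b, p.1 b ∧ ∀ i, (R (v p i) b ↔ w i)⟩
      let decode : Code → (B → Prop) := fun c b => c.2.2 (fun i => R (c.2.1 i) b)
      have hdec : ∀ p, decode (code p) = p.1 := by
        intro p
        funext b
        apply propext
        constructor
        · rintro ⟨b', hb', hagree⟩
          exact (hv p b' b hagree).mp hb'
        · intro hb
          exact ⟨b, hb, fun i => Iff.rfl⟩
      have hinj : Function.Injective code := by
        intro p q hpq
        apply Subtype.ext
        rw [← hdec p, ← hdec q, hpq]
      have hA : Cardinal.aleph0 ≤ Cardinal.mk A := Cardinal.aleph0_le_mk A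
      have hsummand : ∀ n : ℕ,
          Cardinal.mk ((Fin n → A) × ((Fin n → Prop) → Prop)) ≤ Cardinal.mk A := by
        intro n
        have h1 : Cardinal.mk (Fin n → A) ≤ Cardinal.mk A := by
          have : Cardinal.mk (Fin n → A) = Cardinal.mk A ^ (n : Cardinal) := by
            rw [← Cardinal.power_def, Cardinal.mk_fin]
          rw [this]
          exact_mod_cast Cardinal.power_nat_le hA
        have h2 : Cardinal.mk ((Fin n → Prop) → Prop) ≤ Cardinal.mk A :=
          le_trans (Cardinal.lt_aleph0_of_finite _).le hA
        calc Cardinal.mk ((Fin n → A) × ((Fin n → Prop) → Prop))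
            = Cardinal.mk (Fin n → A) * Cardinal.mk ((Fin n → Prop) → Prop) := by
              rw [Cardinal.mk_prod, Cardinal.lift_id, Cardinal.lift_id]
          _ ≤ Cardinal.mk A * Cardinal.mk A := mul_le_mul' h1 h2
          _ = Cardinal.mk A := Cardinal.mul_eq_self hA
      have hcode : Cardinal.mk Code ≤ Cardinal.mk A := by
        rw [show Cardinal.mk Code = Cardinal.sum
            (fun n : ℕ => Cardinal.mk ((Fin n → A) × ((Fin n → Prop) → Prop))) from
          Cardinal.mk_sigma _]
        calc Cardinal.sum (fun n : ℕ => Cardinal.mk ((Fin n → A) × ((Fin n → Prop) → Prop)))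
            ≤ Cardinal.sum (fun _ : ℕ => Cardinal.mk A) := Cardinal.sum_le_sum _ _ hsummand
          _ = Cardinal.mk ℕ * Cardinal.mk A := Cardinal.sum_const' _ _
          _ = Cardinal.aleph0 * Cardinal.mk A := by rw [Cardinal.mk_nat]
          _ ≤ Cardinal.mk A * Cardinal.mk A := mul_le_mul' hA le_rfl
          _ = Cardinal.mk A := Cardinal.mul_eq_self hA
      have hfin : Cardinal.mk A ≤ Cardinal.mk (Fin (2 * k) → A) :=
        Cardinal.mk_le_of_injective (f := fun (x : A) (_ : Fin (2 * k)) => x)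
          (fun x y hxy => congrFun hxy ⟨0, by omega⟩)
      exact le_trans (le_trans (Cardinal.mk_le_of_injective hinj) hcode) hfin
  obtain ⟨F⟩ := (Cardinal.le_def _ _).1 hmk
  exact ⟨⟨F, F.injective⟩, hmk⟩
end

section
/- (Harrington's Lemma, combinatorial form) Let A and B be sets, let R ⊆ A × B be a relation, and let k ≥ 1 be an integer. Assume R is k-stable, i.e., there do not exist a₁,…,a_k ∈ A and b₁,…,b_k ∈ B such that R(aᵢ,bⱼ) holds if and only if i ≤ j. Let p : B → Prop and q : A → Prop be predicates. Then it is impossible that both of the following hold: (1) for every finite subset S ⊆ B there exists a ∈ A with q(a) such that for all b ∈ S, R(a,b) holds if and only if p(b) holds; and (2) for every finite subset S ⊆ A there exists b ∈ B with ¬p(b) such that for all a ∈ S, R(a,b) holds if and only if q(a) holds. -/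
open Finset

/-- Harrington's Lemma (combinatorial form): if `R` is `k`-stable, then it is impossible
that `p` is finitely satisfiable by elements of `A` satisfying `q`, while simultaneously
`q` is finitely satisfiable by elements of `B` not satisfying `p`. -/
theorem harrington_lemma {A B : Type} (R : A → B → Prop) (k : ℕ) (hk : 1 ≤ k)
    (hstable : ¬ ∃ (a : Fin k → A) (b : Fin k → B), ∀ i j, R (a i) (b j) ↔ i ≤ j)
    (p : B → Prop) (q : A → Prop) :
    ¬ ((∀ S : Finset B, ∃ a : A, q a ∧ ∀ b ∈ S, (R a b ↔ p b)) ∧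
       (∀ S : Finset A, ∃ b : B, ¬ p b ∧ ∀ a ∈ S, (R a b ↔ q a))) := by
  classical
  rintro ⟨h1, h2⟩
  apply hstable
  suffices h : ∀ n, ∃ (a : Fin n → A) (b : Fin n → B),
      (∀ i, q (a i)) ∧ (∀ j, ¬ p (b j)) ∧ ∀ i j, R (a i) (b j) ↔ i ≤ j by
    obtain ⟨a, b, _, _, hab⟩ := h k
    exact ⟨a, b, hab⟩
  intro n
  induction n with
  | zero => exact ⟨Fin.elim0, Fin.elim0, fun i => i.elim0, fun j => j.elim0, fun i => i.elim0⟩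
  | succ n ih =>
    obtain ⟨a, b, hq, hp, hR⟩ := ih
    obtain ⟨a', hqa', ha'⟩ := h1 (Finset.image b Finset.univ)
    obtain ⟨b', hpb', hb'⟩ := h2 (insert a' (Finset.image a Finset.univ))
    have hb'mem : ∀ i : Fin n, R (a i) b' ↔ q (a i) := fun i =>
      hb' (a i) (Finset.mem_insert_of_mem (Finset.mem_image_of_mem a (Finset.mem_univ i)))
    have hb'a' : R a' b' ↔ q a' := hb' a' (Finset.mem_insert_self _ _)
    have ha'mem : ∀ j : Fin n, R a' (b j) ↔ p (b j) := fun j =>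
      ha' (b j) (Finset.mem_image_of_mem b (Finset.mem_univ j))
    refine ⟨Fin.snoc a a', Fin.snoc b b', ?_, ?_, ?_⟩
    · intro i
      refine Fin.lastCases ?_ ?_ i
      · simpa using hqa'
      · intro i'; simpa using hq i'
    · intro j
      refine Fin.lastCases ?_ ?_ j
      · simpa using hpb'
      · intro j'; simpa using hp j'
    · intro i j
      refine Fin.lastCases ?_ ?_ i
      · refine Fin.lastCases ?_ ?_ j
        · simp [hb'a'.trans (iff_of_true hqa' trivial), hqa']
        · intro j'
          simp only [Fin.snoc_last, Fin.snoc_castSucc]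
          rw [ha'mem j']
          constructor
          · intro hpj; exact absurd hpj (hp j')
          · intro hle; exact absurd (Fin.castSucc_lt_last j') (not_lt.mpr hle)
      · intro i'
        refine Fin.lastCases ?_ ?_ j
        · simp only [Fin.snoc_last, Fin.snoc_castSucc]
          rw [hb'mem i']
          exact iff_of_true (hq i') (Fin.le_last _)
        · intro j'
          simp only [Fin.snoc_castSucc]
          rw [hR i' j']
          exact ⟨fun h => Fin.castSucc_le_castSucc_iff.mpr h, fun h => Fin.castSucc_le_castSucc_iff.mp h⟩
end

section
/- Let X be a nonempty compact Hausdorff totally disconnected topological space and let μ be a regular Borel probability measure on X. Suppose C ⊆ X is a closed set with μ(C) > 0 such that μ({p}) = 0 for every p ∈ C. Then there exists a family (K_η), indexed by finite binary strings η ∈ 2^{<ω}, of clopen subsets of X such that K_∅ = X and, for every η: μ(K_η ∩ C) > 0, K_{η0} ⊆ K_η, and K_{η1} = K_η \ K_{η0}. -/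
open MeasureTheory

section aux
variable {X : Type*} [TopologicalSpace X] [CompactSpace X] [T2Space X]
    [TotallyDisconnectedSpace X] [MeasurableSpace X] [BorelSpace X]

private lemma clopen_split (μ : Measure X) [IsProbabilityMeasure μ] [μ.Regular]
    [μ.InnerRegular]
    (C : Set X) (hC : IsClosed C) (hnull : ∀ p ∈ C, μ {p} = 0)
    {A : Set X} (hA : IsClopen A) (hpos : 0 < μ (A ∩ C)) :
    ∃ L : Set X, IsClopen L ∧ L ⊆ A ∧ 0 < μ (L ∩ C) ∧ 0 < μ ((A \ L) ∩ C) := by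
  have hmeas : MeasurableSet (A ∩ C) := (hA.2.measurableSet).inter hC.measurableSet
  obtain ⟨F, hFsub, hFcomp, hFpos⟩ := hmeas.exists_lt_isCompact hpos
  -- for each p ∈ F, a clopen V p with μ (V p) < μ F
  have hV : ∀ p ∈ F, ∃ V : Set X, IsClopen V ∧ p ∈ V ∧ μ V < μ F := by
    intro p hp
    have hpC : p ∈ C := (hFsub hp).2
    obtain ⟨U, hsubU, hUopen, hUlt⟩ := Set.exists_isOpen_lt_of_lt {p} (μ F)
      (by rw [hnull p hpC]; exact hFpos)
    obtain ⟨V, hVclopen, hpV, hVU⟩ := compact_exists_isClopen_in_isOpen hUopen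
      (hsubU rfl)
    exact ⟨V, hVclopen, hpV, lt_of_le_of_lt (measure_mono hVU) hUlt⟩
  choose! V hVclopen hVmem hVlt using hV
  -- finite subcover
  obtain ⟨t, htsub, htfin, htcover⟩ := hFcomp.elim_finite_subcover_image
    (fun p hp => (hVclopen p hp).2)
    (fun x hx => Set.mem_biUnion hx (hVmem x hx))
  -- find a clopen W with 0 < μ (F ∩ W) < μ F, by induction on the finite cover
  have key : ∀ s : Finset X, (∀ p ∈ s, p ∈ F) → 0 < μ (F ∩ ⋃ p ∈ s, V p) →
      ∃ W, IsClopen W ∧ 0 < μ (F ∩ W) ∧ μ (F ∩ W) < μ F := by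
    intro s
    classical
    induction s using Finset.induction_on with
    | empty => simp
    | @insert a s ha ih =>
      intro hmem hposs
      by_cases h0 : 0 < μ (F ∩ ⋃ p ∈ s, V p)
      · exact ih (fun p hp => hmem p (Finset.mem_insert_of_mem hp)) h0
      · have haF : a ∈ F := hmem a (Finset.mem_insert_self a s)
        have h0' : μ (F ∩ ⋃ p ∈ s, V p) = 0 := by
          simpa [pos_iff_ne_zero, not_not] using h0
        have hle : μ (F ∩ ⋃ p ∈ insert a s, V p) ≤ μ (F ∩ V a) := by
          calc μ (F ∩ ⋃ p ∈ insert a s, V p)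
              = μ ((F ∩ V a) ∪ (F ∩ ⋃ p ∈ s, V p)) := by
                rw [Finset.set_biUnion_insert, Set.inter_union_distrib_left]
            _ ≤ μ (F ∩ V a) + μ (F ∩ ⋃ p ∈ s, V p) := measure_union_le _ _
            _ = μ (F ∩ V a) := by rw [h0', add_zero]
        exact ⟨V a, hVclopen a haF, lt_of_lt_of_le hposs hle,
          lt_of_le_of_lt (measure_mono Set.inter_subset_right) (hVlt a haF)⟩
  obtain ⟨W, hWclopen, hWpos, hWlt⟩ := key htfin.toFinset
    (fun p hp => htsub (htfin.mem_toFinset.mp hp))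
    (by
      have : F ∩ ⋃ p ∈ htfin.toFinset, V p = F := by
        apply Set.inter_eq_left.mpr
        intro x hx
        simpa [htfin.mem_toFinset] using htcover hx
      rw [this]; exact hFpos)
  -- μ (F \ W) > 0
  have hdiff : 0 < μ (F \ W) := by
    rcases (pos_iff_ne_zero.mp hFpos).lt_or_gt.elim (fun h => absurd h (by simp)) id
      with _
    by_contra h
    have h' : μ (F \ W) = 0 := by simpa [pos_iff_ne_zero, not_not] using h
    have := measure_inter_add_diff F hWclopen.2.measurableSet (μ := μ)
    rw [h', add_zero] at this
    exact absurd (this ▸ hWlt) (lt_irrefl _)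
  refine ⟨A ∩ W, hA.inter hWclopen, Set.inter_subset_left, ?_, ?_⟩
  · refine lt_of_lt_of_le hWpos (measure_mono ?_)
    intro x hx
    exact ⟨⟨(hFsub hx.1).1, hx.2⟩, (hFsub hx.1).2⟩
  · refine lt_of_lt_of_le hdiff (measure_mono ?_)
    intro x hx
    exact ⟨⟨(hFsub hx.1).1, fun h => hx.2 h.2⟩, (hFsub hx.1).2⟩

/-- Auxiliary recursion: build the tree reading the string from the most recent bit. -/
private noncomputable def treeAux (next : Set X → Set X) : List Bool → Set X
  | [] => Set.univ
  | b :: η => if b then treeAux next η \ next (treeAux next η) else next (treeAux next η)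

end aux

/-- The binary-tree construction in the proof of the decomposition theorem for stable
Keisler measures: in a Stone space with a regular Borel probability measure, a closed set
of positive measure all of whose points are null supports a full binary tree of clopen
sets, each meeting the closed set in positive measure. -/
theorem clopen_binary_tree {X : Type*} [TopologicalSpace X] [CompactSpace X] [T2Space X]
    [TotallyDisconnectedSpace X] [Nonempty X]
    [MeasurableSpace X] [BorelSpace X]
    (μ : Measure X) [IsProbabilityMeasure μ] [μ.Regular] [μ.InnerRegular]
    (C : Set X) (hC : IsClosed C) (hCpos : 0 < μ C)
    (hnull : ∀ p ∈ C, μ {p} = 0) :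
    ∃ K : List Bool → Set X,
      K [] = Set.univ ∧
      (∀ η, IsClopen (K η)) ∧
      (∀ η, 0 < μ (K η ∩ C)) ∧
      (∀ η, K (η ++ [false]) ⊆ K η) ∧
      (∀ η, K (η ++ [true]) = K η \ K (η ++ [false])) := by
  have key : ∀ A : Set X, ∃ L : Set X,
      (IsClopen A ∧ 0 < μ (A ∩ C)) →
        IsClopen L ∧ L ⊆ A ∧ 0 < μ (L ∩ C) ∧ 0 < μ ((A \ L) ∩ C) := by
    intro A
    by_cases h : IsClopen A ∧ 0 < μ (A ∩ C)
    · obtain ⟨L, hL⟩ := clopen_split μ C hC hnull h.1 h.2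
      exact ⟨L, fun _ => hL⟩
    · exact ⟨∅, fun h' => absurd h' h⟩
  choose next hnext using key
  set K' : List Bool → Set X := treeAux next with hK'
  -- invariant
  have inv : ∀ η : List Bool, IsClopen (K' η) ∧ 0 < μ (K' η ∩ C) := by
    intro η
    induction η with
    | nil =>
      refine ⟨isClopen_univ, ?_⟩
      show 0 < μ (Set.univ ∩ C)
      simpa using hCpos
    | cons b η ih =>
      obtain ⟨hclopen, hsub, hpos1, hpos2⟩ := hnext (K' η) ih
      cases b with
      | false => exact ⟨hclopen, hpos1⟩
      | true =>
        constructor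
        · show IsClopen (K' η \ next (K' η))
          exact ih.1.diff hclopen
        · show 0 < μ ((K' η \ next (K' η)) ∩ C)
          exact hpos2
  refine ⟨fun η => K' η.reverse, rfl, fun η => (inv η.reverse).1,
    fun η => (inv η.reverse).2, ?_, ?_⟩
  · intro η
    show K' (η ++ [false]).reverse ⊆ K' η.reverse
    have h : (η ++ [false]).reverse = false :: η.reverse := by simp
    rw [h]
    exact (hnext (K' η.reverse) (inv η.reverse)).2.1
  · intro η
    show K' (η ++ [true]).reverse = K' η.reverse \ K' (η ++ [false]).reverse
    have h1 : (η ++ [true]).reverse = true :: η.reverse := by simp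
    have h2 : (η ++ [false]).reverse = false :: η.reverse := by simp
    rw [h1, h2]
    rfl
end

section
/- Let X be a nonempty compact Hausdorff totally disconnected topological space whose cardinality is strictly less than 2^{ℵ₀}, and let μ be a regular Borel probability measure on X. Then μ is purely atomic: the set D = {p ∈ X : μ({p}) > 0} is countable, μ(D) = 1, and for every Borel set S ⊆ X, μ(S) = Σ_{p ∈ S ∩ D} μ({p}). -/
open MeasureTheory Set

/-- A regular Borel probability measure on a Stone space of cardinality less than the
continuum is purely atomic: the set `D` of point masses is countable, has full measure,
and the measure of every Borel set is the sum of the masses of its points in `D`. -/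
theorem purely_atomic_of_small_stone_space {X : Type*} [TopologicalSpace X] [CompactSpace X]
    [T2Space X] [TotallyDisconnectedSpace X] [Nonempty X]
    [MeasurableSpace X] [BorelSpace X]
    (hcard : Cardinal.mk X < Cardinal.continuum)
    (μ : Measure X) [IsProbabilityMeasure μ] [μ.Regular] [μ.InnerRegular] :
    {p : X | 0 < μ {p}}.Countable ∧
    μ {p : X | 0 < μ {p}} = 1 ∧
    ∀ S : Set X, MeasurableSet S →
      μ S = ∑' p : ↥(S ∩ {p : X | 0 < μ {p}}), μ {(p : X)} := by
  set D := {p : X | 0 < μ {p}} with hD_def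
  have hDc : D.Countable := by
    have := Measure.countable_meas_pos_of_disjoint_iUnion (μ := μ)
      (As := fun p : X => ({p} : Set X))
      (fun p => measurableSet_singleton p)
      (fun p q hpq => by simp [Function.onFun, hpq])
    simpa using this
  have hDm : MeasurableSet D := hDc.measurableSet
  have hkey : μ Dᶜ = 0 := by
    by_contra h0
    have hpos : (0 : ENNReal) < μ Dᶜ := zero_lt_iff.mpr h0
    -- a compact positive-measure subset of Dᶜ can be split into two disjoint such subsets
    have split : ∀ K : Set X, IsCompact K → K ⊆ Dᶜ → 0 < μ K →
        ∃ V : Set X, IsClopen V ∧ 0 < μ (K ∩ V) ∧ 0 < μ (K \ V) := by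
      intro K hKc hKD hKpos
      have hx : ∀ x : X, x ∈ K → ∃ V : Set X, IsClopen V ∧ x ∈ V ∧ μ V < μ K := by
        intro x hxK
        have hx0 : μ {x} = 0 := by
          by_contra h
          exact hKD hxK (zero_lt_iff.mpr h)
        obtain ⟨U, hxU, hUopen, hUlt⟩ :=
          Set.exists_isOpen_lt_of_lt {x} (μ K) (by rw [hx0]; exact hKpos)
        obtain ⟨V, hVclopen, hxV, hVU⟩ :=
          compact_exists_isClopen_in_isOpen hUopen (hxU rfl)
        exact ⟨V, hVclopen, hxV, lt_of_le_of_lt (measure_mono hVU) hUlt⟩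
      choose! V hV1 hV2 hV3 using hx
      obtain ⟨t, ht⟩ := hKc.elim_finite_subcover (fun x : K => V x)
        (fun x => (hV1 x x.2).isOpen)
        (fun x hxK => Set.mem_iUnion.mpr ⟨⟨x, hxK⟩, hV2 x hxK⟩)
      have hexists : ∃ i ∈ t, 0 < μ (K ∩ V i) := by
        by_contra hcon
        push_neg at hcon
        have : μ K = 0 := by
          have hKsub : K ⊆ ⋃ i ∈ t, K ∩ V (i : X) := by
            intro x hxK
            obtain ⟨i, hi, hxi⟩ := Set.mem_iUnion₂.mp (ht hxK)
            exact Set.mem_iUnion₂.mpr ⟨i, hi, hxK, hxi⟩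
          refine measure_mono_null hKsub ?_
          refine (measure_biUnion_null_iff t.countable_toSet).mpr ?_
          intro i hi
          exact le_antisymm (hcon i hi) zero_le
        exact absurd this hKpos.ne'
      obtain ⟨i, _, hi⟩ := hexists
      refine ⟨V i, hV1 i i.2, hi, ?_⟩
      have hVm : MeasurableSet (V (i : X)) := (hV1 i i.2).isOpen.measurableSet
      have hsum : μ (K ∩ V (i : X)) + μ (K \ V (i : X)) = μ K :=
        measure_inter_add_diff K hVm
      by_contra hzero
      rw [not_lt, nonpos_iff_eq_zero] at hzero
      rw [hzero, add_zero] at hsum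
      have : μ (K ∩ V (i : X)) < μ K :=
        lt_of_le_of_lt (measure_mono inter_subset_right) (hV3 i i.2)
      exact absurd hsum this.ne
    -- the type of good sets
    obtain ⟨K₀, hK₀D, hK₀c, hK₀pos⟩ := hDm.compl.exists_lt_isCompact hpos
    let G := {K : Set X // IsCompact K ∧ K ⊆ Dᶜ ∧ 0 < μ K}
    have step : ∀ A : G, ∃ BC : G × G,
        BC.1.1 ⊆ A.1 ∧ BC.2.1 ⊆ A.1 ∧ Disjoint BC.1.1 BC.2.1 := by
      rintro ⟨K, hKc, hKD, hKpos⟩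
      obtain ⟨W, hW, h1, h2⟩ := split K hKc hKD hKpos
      refine ⟨(⟨K ∩ W, hKc.inter_right hW.isClosed,
        fun x hx => hKD hx.1, h1⟩,
        ⟨K \ W, hKc.diff hW.isOpen, fun x hx => hKD hx.1, h2⟩),
        inter_subset_left, diff_subset, ?_⟩
      rw [Set.disjoint_left]
      rintro x ⟨-, hxW⟩ ⟨-, hxW'⟩
      exact hxW' hxW
    choose f hf1 hf2 hf3 using step
    let A₀ : G := ⟨K₀, hK₀c, hK₀D, hK₀pos⟩
    let F : (ℕ → Bool) → ℕ → G := fun g n =>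
      Nat.rec A₀ (fun n A => bif g n then (f A).1 else (f A).2) n
    have hF0 : ∀ g, F g 0 = A₀ := fun g => rfl
    have hFsucc : ∀ g n, F g (n + 1) = bif g n then (f (F g n)).1 else (f (F g n)).2 :=
      fun g n => rfl
    have hFmono : ∀ g n, (F g (n + 1)).1 ⊆ (F g n).1 := by
      intro g n
      rw [hFsucc]
      cases g n <;> simp [hf1, hf2]
    have hFagree : ∀ g g' n, (∀ i < n, g i = g' i) → F g n = F g' n := by
      intro g g' n
      induction n with
      | zero => intro _; rfl
      | succ n ih =>
        intro h
        rw [hFsucc, hFsucc, ih (fun i hi => h i (Nat.lt_succ_of_lt hi)),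
          h n (Nat.lt_succ_self n)]
    have hFne : ∀ g n, ((F g n).1).Nonempty := fun g n =>
      nonempty_of_measure_ne_zero (F g n).2.2.2.ne'
    have hInter : ∀ g : ℕ → Bool, (⋂ n, (F g n).1).Nonempty := by
      intro g
      exact IsCompact.nonempty_iInter_of_sequence_nonempty_isCompact_isClosed
        (fun n => (F g n).1) (hFmono g) (hFne g) (F g 0).2.1
        (fun n => (F g n).2.1.isClosed)
    choose φ hφ using hInter
    have hφinj : Function.Injective φ := by
      intro g g' hgg'
      funext n
      induction n using Nat.strong_induction_on with
      | _ n ih =>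
        by_contra hne
        have hA : F g n = F g' n := hFagree g g' n ih
        have hx1 : φ g ∈ (F g (n + 1)).1 := Set.mem_iInter.mp (hφ g) (n + 1)
        have hx2 : φ g ∈ (F g' (n + 1)).1 := by
          rw [hgg']; exact Set.mem_iInter.mp (hφ g') (n + 1)
        rw [hFsucc] at hx1 hx2
        rw [hA] at hx1
        have hdisj := hf3 (F g' n)
        cases hb : g n <;> cases hb' : g' n <;>
          simp only [hb, hb', cond_true, cond_false] at hx1 hx2 hne
        · exact hne trivial
        · exact Set.disjoint_left.mp hdisj hx2 hx1
        · exact Set.disjoint_left.mp hdisj hx1 hx2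
        · exact hne trivial
    -- cardinality contradiction
    have hle : Cardinal.continuum ≤ Cardinal.mk X := by
      have h1 : Cardinal.lift.{_, 0} (Cardinal.mk (ℕ → Bool)) ≤
          Cardinal.lift (Cardinal.mk X) :=
        Cardinal.lift_mk_le'.mpr ⟨⟨φ, hφinj⟩⟩
      have h2 : Cardinal.mk (ℕ → Bool) = Cardinal.continuum := by
        rw [← Cardinal.power_def, Cardinal.mk_bool, Cardinal.mk_nat,
          Cardinal.two_power_aleph0]
      rw [h2, Cardinal.lift_continuum] at h1
      simpa using h1
    exact absurd hcard (not_lt.mpr hle)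
  refine ⟨hDc, ?_, ?_⟩
  · have h := measure_add_measure_compl (μ := μ) hDm
    rw [hkey, add_zero, measure_univ] at h
    exact h
  · intro S hS
    have hSD : (S ∩ D).Countable := hDc.mono inter_subset_right
    have h1 : μ S = μ (S ∩ D) := by
      have h2 : μ (S \ D) = 0 :=
        measure_mono_null (fun x hx => hx.2) hkey
      rw [← measure_inter_add_diff S hDm, h2, add_zero]
    have h3 := measure_biUnion (μ := μ) (f := fun b => ({b} : Set X)) hSD
      (fun p _ q _ hpq => by simpa using hpq)
      (fun b _ => measurableSet_singleton b)
    rw [Set.biUnion_of_singleton] at h3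
    rw [h1, h3]
end
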